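/- arXiv:2008.06745 — 9 statements merged into one kernel-verified Lean document; each statement's English description precedes it below -/
import Mathlib

section
/- Let P be a Γ-colored poset (of any cardinality) that satisfies Green's properties G1, G2, G3, and G5. Then P also satisfies property G4: for all adjacent colors a, b, every element of P of color a has a neighbor of color b. -/
namespace GCP

/-- A Dynkin diagram on a finite set `Γ` of colors, encoded by the integers
`θ a b` of its generalized Cartan matrix. -/
structure DynkinDiagram (Γ : Type*) [Fintype Γ] where
  θ : Γ → Γ → ℤ
  diag : ∀ a, θ a a = 2
  offdiag_nonpos : ∀ a b, a ≠ b → θ a b ≤ 0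
  zero_iff : ∀ a b, a ≠ b → (θ a b = 0 ↔ θ b a = 0)

variable {Γ : Type*} [Fintype Γ] {P : Type*} [PartialOrder P] [LocallyFiniteOrder P]

/-- Distinct colors `a` and `b` are adjacent when `θ a b < 0`. -/
def DynkinDiagram.Adj (D : DynkinDiagram Γ) (a b : Γ) : Prop :=
  a ≠ b ∧ D.θ a b < 0

/-- Distinct colors `a` and `b` are distant when `θ a b = 0`. -/
def DynkinDiagram.Distant (D : DynkinDiagram Γ) (a b : Γ) : Prop :=
  a ≠ b ∧ D.θ a b = 0

theorem DynkinDiagram.Adj.symm {D : DynkinDiagram Γ} {a b : Γ} (h : D.Adj a b) :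
    D.Adj b a :=
  ⟨h.1.symm, lt_of_le_of_ne (D.offdiag_nonpos b a h.1.symm)
    (fun h0 => h.2.ne ((D.zero_iff a b h.1).mpr h0))⟩

/-- The simple graph underlying a Dynkin diagram, with an edge between each
pair of adjacent colors. -/
def DynkinDiagram.graph (D : DynkinDiagram Γ) : SimpleGraph Γ where
  Adj a b := D.Adj a b
  symm := ⟨fun _ _ h => h.symm⟩
  loopless := ⟨fun _ h => h.1 rfl⟩

/-- The Dynkin diagram is connected: any two colors are joined by a path of
adjacencies. -/
def DynkinDiagram.Connected (D : DynkinDiagram Γ) : Prop :=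
  ∀ a b : Γ, Relation.ReflTransGen D.Adj a b

/-- A poset is connected: any two elements are linked by a finite chain of
comparabilities (equivalently, the poset cannot be written as the disjoint
union of two nonempty subposets). -/
def PosetConnected (P : Type*) [PartialOrder P] : Prop :=
  ∀ x y : P, Relation.ReflTransGen (fun u v : P => u ≤ v ∨ v ≤ u) x y

/-- `x < y` are consecutive elements of the color `a`. -/
def Consecutive (κ : P → Γ) (a : Γ) (x y : P) : Prop :=
  x < y ∧ κ x = a ∧ κ y = a ∧ ∀ z ∈ Finset.Ioo x y, κ z ≠ a

/-- EC: elements with equal colors are comparable. -/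
def EC (κ : P → Γ) : Prop := ∀ x y : P, κ x = κ y → x ≤ y ∨ y ≤ x

/-- NA: neighbors (covering pairs) have adjacent colors. -/
def NA (D : DynkinDiagram Γ) (κ : P → Γ) : Prop :=
  ∀ x y : P, x ⋖ y → D.Adj (κ x) (κ y)

/-- AC: elements with adjacent colors are comparable. -/
def AC (D : DynkinDiagram Γ) (κ : P → Γ) : Prop :=
  ∀ x y : P, D.Adj (κ x) (κ y) → x ≤ y ∨ y ≤ x

/-- ICE2: the census of the open interval between consecutive elements of a
color is two. -/
def ICE2 (D : DynkinDiagram Γ) (κ : P → Γ) : Prop :=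
  ∀ (a : Γ) (x y : P), Consecutive κ a x y →
    ∑ z ∈ Finset.Ioo x y, (-D.θ (κ z) a) = 2

/-- `U(x,S)`: elements of `S` above `x` with color adjacent to that of `x`. -/
def USet (D : DynkinDiagram Γ) (κ : P → Γ) (S : Set P) (x : P) : Set P :=
  {y ∈ S | x < y ∧ D.Adj (κ y) (κ x)}

/-- `L(x,S)`: elements of `S` below `x` with color adjacent to that of `x`. -/
def LSet (D : DynkinDiagram Γ) (κ : P → Γ) (S : Set P) (x : P) : Set P :=
  {y ∈ S | y < x ∧ D.Adj (κ y) (κ x)}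

/-- UCBk: for every `x` maximal among elements of its color, `U(x,P)` is
finite with census at most `k`. -/
def UCB (D : DynkinDiagram Γ) (κ : P → Γ) (k : ℕ) : Prop :=
  ∀ x : P, (∀ y : P, κ y = κ x → ¬ x < y) →
    ∃ hfin : (USet D κ Set.univ x).Finite,
      ∑ y ∈ hfin.toFinset, (-D.θ (κ y) (κ x)) ≤ (k : ℤ)

/-- LCBk: for every `x` minimal among elements of its color, `L(x,P)` is
finite with census at most `k`. -/
def LCB (D : DynkinDiagram Γ) (κ : P → Γ) (k : ℕ) : Prop :=
  ∀ x : P, (∀ y : P, κ y = κ x → ¬ y < x) →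
    ∃ hfin : (LSet D κ Set.univ x).Finite,
      ∑ y ∈ hfin.toFinset, (-D.θ (κ y) (κ x)) ≤ (k : ℤ)

/-- The coloring properties of a Γ-colored d-complete poset (the coloring is
required to be surjective separately). -/
def DComplete (D : DynkinDiagram Γ) (κ : P → Γ) : Prop :=
  EC κ ∧ NA D κ ∧ AC D κ ∧ ICE2 D κ ∧ UCB D κ 1

/-- G1: each `P_a` and each `P_b ∪ P_c` for adjacent `b, c` is a chain. -/
def G1 (D : DynkinDiagram Γ) (κ : P → Γ) : Prop :=
  (∀ a : Γ, IsChain (· ≤ ·) {x : P | κ x = a}) ∧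
    ∀ b c : Γ, D.Adj b c → IsChain (· ≤ ·) {x : P | κ x = b ∨ κ x = c}

/-- G2: the order is the minimal partial order extending the given orders on
the chains `P_a` and `P_b ∪ P_c`; i.e. every relation `x ≤ y` lies in the
reflexive transitive closure of the relations between pairs of equal or
adjacent colors. -/
def G2 (D : DynkinDiagram Γ) (κ : P → Γ) : Prop :=
  ∀ x y : P, x ≤ y →
    Relation.ReflTransGen (fun u v : P => u ≤ v ∧ (κ u = κ v ∨ D.Adj (κ u) (κ v))) x y

/-- G3: every color set `P_a` is order-isomorphic to `ℤ`. -/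
def G3 (κ : P → Γ) : Prop := ∀ a : Γ, Nonempty ({x : P | κ x = a} ≃o ℤ)

/-- G4: for adjacent colors `a, b`, every element of color `a` has a neighbor
of color `b`. -/
def G4 (D : DynkinDiagram Γ) (κ : P → Γ) : Prop :=
  ∀ a b : Γ, D.Adj a b → ∀ x : P, κ x = a → ∃ y : P, κ y = b ∧ (x ⋖ y ∨ y ⋖ x)

/-- G5: the sum of `θ (κ z) a` over the closed interval between consecutive
elements of color `a` is two. -/
def G5 (D : DynkinDiagram Γ) (κ : P → Γ) : Prop :=
  ∀ (a : Γ) (x y : P), Consecutive κ a x y →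
    ∑ z ∈ Finset.Icc x y, D.θ (κ z) a = 2

/-- A full heap: a Γ-colored poset satisfying G1–G5. -/
def FullHeap (D : DynkinDiagram Γ) (κ : P → Γ) : Prop :=
  G1 D κ ∧ G2 D κ ∧ G3 κ ∧ G4 D κ ∧ G5 D κ

/-- S1: neighbors have equal or adjacent colors and incomparable elements
have distant colors. -/
def S1 (D : DynkinDiagram Γ) (κ : P → Γ) : Prop :=
  (∀ x y : P, x ⋖ y → κ x = κ y ∨ D.Adj (κ x) (κ y)) ∧
    ∀ x y : P, ¬ x ≤ y → ¬ y ≤ x → D.Distant (κ x) (κ y)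

/-- S2: the open interval between consecutive elements of color `a` contains
either exactly two elements of color adjacent to `a`, both `1`-adjacent to
`a`, or exactly one element, whose color is `2`-adjacent to `a`. -/
def S2 (D : DynkinDiagram Γ) (κ : P → Γ) : Prop :=
  ∀ (a : Γ) (x y : P), Consecutive κ a x y →
    (∃ u ∈ Finset.Ioo x y, ∃ v ∈ Finset.Ioo x y, u ≠ v ∧
        D.θ (κ u) a = -1 ∧ D.θ (κ v) a = -1 ∧
        ∀ z ∈ Finset.Ioo x y, D.Adj (κ z) a → z = u ∨ z = v) ∨
    (∃ w : P, Finset.Ioo x y = {w} ∧ D.θ (κ w) a = -2)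

/-- S3: an element maximal among elements of its color is covered by at most
one element; any such cover has color `1`-adjacent to it and is maximal among
elements of its own color. -/
def S3 (D : DynkinDiagram Γ) (κ : P → Γ) : Prop :=
  ∀ x : P, (∀ y : P, κ y = κ x → ¬ x < y) →
    (∀ y z : P, x ⋖ y → x ⋖ z → y = z) ∧
      ∀ y : P, x ⋖ y → D.θ (κ y) (κ x) = -1 ∧ ∀ z : P, κ z = κ y → ¬ y < z

/-- S4: the underlying simple graph of the Dynkin diagram is acyclic. -/
def S4 (D : DynkinDiagram Γ) : Prop := D.graph.IsAcyclic

/-- The coloring properties of a dominant minuscule heap (the poset is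
additionally required to be finite, and the coloring surjective). -/
def DominantMinusculeHeapProps (D : DynkinDiagram Γ) (κ : P → Γ) : Prop :=
  S1 D κ ∧ S2 D κ ∧ S3 D κ ∧ S4 D

/-- The color set `P_b` is bounded above in `P`. -/
def ColorBddAbove (κ : P → Γ) (b : Γ) : Prop := ∃ u : P, ∀ x : P, κ x = b → x ≤ u

/-- The color set `P_b` is bounded below in `P`. -/
def ColorBddBelow (κ : P → Γ) (b : Γ) : Prop := ∃ l : P, ∀ x : P, κ x = b → l ≤ x

end GCP

/-! Fix `x` of color `a` and a color `b` adjacent to `a`. By G1 every element of color `b` is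
comparable with `x`, and by G3 (the poset being locally finite) there are such elements on both
sides of `x`, so `x` lies strictly between two consecutive elements `y' < y` of color `b`. By G5 the
elements strictly between them have `b`-census `∑ -θ (κ z) b = 2`, and every element whose color is
adjacent to `b` contributes at least `1`. Covering pairs have adjacent colors (G2 allows only equal
or adjacent colors, and G5 excludes equal ones). So if neither `y' ⋖ x` nor `x ⋖ y`, the cover `v`
of `y'` below `x` and the element `w` covered by `y` above `x` contribute together with `x` at
least `3`. -/

section LocallyFinite

variable {P : Type*} [PartialOrder P] [LocallyFiniteOrder P]

theorem not_bddAbove_of_orderIso_int {S : Set P} (e : S ≃o ℤ) : ¬BddAbove S := by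
  intro hS
  have hfin : (S ∩ Set.Ici (e.symm 0 : P)).Finite :=
    (bddBelow_Ici.mono Set.inter_subset_right).finite_of_bddAbove (hS.mono Set.inter_subset_left)
  obtain ⟨m, hm⟩ := hfin.exists_maximal ⟨_, (e.symm 0).2, le_rfl⟩
  set s : S := e.symm (e ⟨m, hm.prop.1⟩ + 1)
  have hms : m < s := by
    change (⟨m, hm.prop.1⟩ : S) < s
    rw [← e.lt_iff_lt, e.apply_symm_apply]
    exact lt_add_one _
  exact hm.not_gt ⟨s.2, hm.prop.2.trans hms.le⟩ hms

theorem not_bddBelow_of_orderIso_int {S : Set P} (e : S ≃o ℤ) : ¬BddBelow S := by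
  intro hS
  have hfin : (S ∩ Set.Iic (e.symm 0 : P)).Finite :=
    (hS.mono Set.inter_subset_left).finite_of_bddAbove (bddAbove_Iic.mono Set.inter_subset_right)
  obtain ⟨m, hm⟩ := hfin.exists_minimal ⟨_, (e.symm 0).2, le_rfl⟩
  set s : S := e.symm (e ⟨m, hm.prop.1⟩ - 1)
  have hsm : s < m := by
    change s < (⟨m, hm.prop.1⟩ : S)
    rw [← e.lt_iff_lt, e.apply_symm_apply]
    exact sub_one_lt _
  exact hm.not_lt ⟨s.2, hsm.le.trans hm.prop.2⟩ hsm

theorem IsChain.exists_isLeast_inter_Ioi {S : Set P} (hS : IsChain (· ≤ ·) S) {x s : P}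
    (hs : s ∈ S) (hxs : x < s) : ∃ y, IsLeast (S ∩ Set.Ioi x) y := by
  have hfin : (S ∩ Set.Ioc x s).Finite := (Set.finite_Ioc x s).subset Set.inter_subset_right
  obtain ⟨m, hm⟩ := hfin.exists_minimal ⟨s, hs, hxs, le_rfl⟩
  refine ⟨m, ⟨hm.prop.1, hm.prop.2.1⟩, fun z ⟨hzS, hxz⟩ => ?_⟩
  rcases hS.total hm.prop.1 hzS with hmz | hzm
  · exact hmz
  · exact hm.le_of_le ⟨hzS, hxz, hzm.trans hm.prop.2.2⟩ hzm

theorem IsChain.exists_isGreatest_inter_Iio {S : Set P} (hS : IsChain (· ≤ ·) S) {x s : P}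
    (hs : s ∈ S) (hsx : s < x) : ∃ y, IsGreatest (S ∩ Set.Iio x) y := by
  have hfin : (S ∩ Set.Ico s x).Finite := (Set.finite_Ico s x).subset Set.inter_subset_right
  obtain ⟨m, hm⟩ := hfin.exists_maximal ⟨s, hs, le_rfl, hsx⟩
  refine ⟨m, ⟨hm.prop.1, hm.prop.2.2⟩, fun z ⟨hzS, hzx⟩ => ?_⟩
  rcases hS.total hm.prop.1 hzS with hmz | hzm
  · exact hm.le_of_ge ⟨hzS, hm.prop.2.1.trans hmz, hzx⟩ hmz
  · exact hzm

end LocallyFinite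

namespace GCP

variable {Γ : Type*} [Fintype Γ] {P : Type*} [PartialOrder P]

section Coloring

open Finset

variable {D : DynkinDiagram Γ} {κ : P → Γ}

theorem G1.lt_or_lt_of_adj (h1 : G1 D κ) {a b : Γ} (hab : D.Adj a b) {x z : P} (hx : κ x = a)
    (hz : κ z = b) : x < z ∨ z < x := by
  have hxz : x ≠ z := fun h => hab.1 (by rw [← hx, ← hz, h])
  exact (h1.2 a b hab (Or.inl hx) (Or.inr hz) hxz).imp hxz.lt_of_le hxz.symm.lt_of_le

theorem G2.eq_or_adj_of_covBy (h2 : G2 D κ) {x y : P} (hxy : x ⋖ y) :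
    κ x = κ y ∨ D.Adj (κ x) (κ y) := by
  induction h2 x y hxy.le using Relation.ReflTransGen.head_induction_on with
  | refl => exact absurd hxy.lt (lt_irrefl _)
  | head hxu huy ih =>
    have huy' := Relation.reflTransGen_le_of_le (r := (· ≤ ·)) (fun _ _ h => h.1) _ _ huy
    rcases hxy.eq_or_eq hxu.1 huy' with rfl | rfl
    · exact ih hxy
    · exact hxu.2

variable [LocallyFiniteOrder P]

theorem exists_isLeast_color_above (h1 : G1 D κ) (h3 : G3 κ) {a b : Γ} (hab : D.Adj a b) {x : P}
    (hx : κ x = a) : ∃ y, IsLeast ({z | κ z = b} ∩ Set.Ioi x) y := by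
  obtain ⟨s, hs, hsx⟩ := not_bddAbove_iff'.mp (not_bddAbove_of_orderIso_int (h3 b).some) x
  exact (h1.1 b).exists_isLeast_inter_Ioi hs
    ((h1.lt_or_lt_of_adj hab hx hs).resolve_right fun h => hsx h.le)

theorem exists_isGreatest_color_below (h1 : G1 D κ) (h3 : G3 κ) {a b : Γ} (hab : D.Adj a b)
    {x : P} (hx : κ x = a) : ∃ y, IsGreatest ({z | κ z = b} ∩ Set.Iio x) y := by
  obtain ⟨s, hs, hxs⟩ := not_bddBelow_iff'.mp (not_bddBelow_of_orderIso_int (h3 b).some) x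
  exact (h1.1 b).exists_isGreatest_inter_Iio hs
    ((h1.lt_or_lt_of_adj hab hx hs).resolve_left fun h => hxs h.le)

theorem G1.consecutive_of_isGreatest_of_isLeast (h1 : G1 D κ) {a b : Γ} (hab : D.Adj a b)
    {x y y' : P} (hx : κ x = a) (hy' : IsGreatest ({z | κ z = b} ∩ Set.Iio x) y')
    (hy : IsLeast ({z | κ z = b} ∩ Set.Ioi x) y) : Consecutive κ b y' y := by
  refine ⟨hy'.1.2.trans hy.1.2, hy'.1.1, hy.1.1, fun z hz hzb => ?_⟩
  obtain ⟨hy'z, hzy⟩ := mem_Ioo.mp hz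
  rcases h1.lt_or_lt_of_adj hab hx hzb with hxz | hzx
  · exact (hy.2 ⟨hzb, hxz⟩).not_gt hzy
  · exact (hy'.2 ⟨hzb, hzx⟩).not_gt hy'z

theorem G5.ice2 (h5 : G5 D κ) : ICE2 D κ := by
  intro b x y hxy
  have h := h5 b x y hxy
  rw [Icc_eq_cons_Ioc hxy.1.le, sum_cons, Ioc_eq_cons_Ioo hxy.1, sum_cons, hxy.2.1, hxy.2.2.1,
    D.diag] at h
  rw [sum_neg_distrib]
  omega

theorem G5.ne_of_covBy (h5 : G5 D κ) {x y : P} (hxy : x ⋖ y) : κ x ≠ κ y := by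
  intro hc
  have hIoo : Ioo x y = ∅ :=
    eq_empty_of_forall_notMem fun z hz => hxy.2 (mem_Ioo.mp hz).1 (mem_Ioo.mp hz).2
  have h := h5.ice2 (κ y) x y ⟨hxy.lt, hc, rfl, by simp [hIoo]⟩
  simp [hIoo] at h

theorem adj_of_covBy (h2 : G2 D κ) (h5 : G5 D κ) {x y : P} (hxy : x ⋖ y) : D.Adj (κ x) (κ y) :=
  (h2.eq_or_adj_of_covBy hxy).resolve_left (h5.ne_of_covBy hxy)

open Classical in
theorem ICE2.card_adj_le_two (h : ICE2 D κ) {b : Γ} {x y : P} (hxy : Consecutive κ b x y) :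
    #{z ∈ Ioo x y | D.Adj (κ z) b} ≤ 2 := by
  have hpos : ∀ z ∈ Ioo x y, 0 ≤ -D.θ (κ z) b := fun z hz =>
    neg_nonneg.mpr (D.offdiag_nonpos _ _ (hxy.2.2.2 z hz))
  suffices (#{z ∈ Ioo x y | D.Adj (κ z) b} : ℤ) ≤ 2 by exact_mod_cast this
  calc (#{z ∈ Ioo x y | D.Adj (κ z) b} : ℤ)
      = ∑ z ∈ Ioo x y with D.Adj (κ z) b, 1 := by simp
    _ ≤ ∑ z ∈ Ioo x y with D.Adj (κ z) b, -D.θ (κ z) b :=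
        sum_le_sum fun z hz => by have := (mem_filter.mp hz).2.2; omega
    _ ≤ ∑ z ∈ Ioo x y, -D.θ (κ z) b :=
        sum_le_sum_of_subset_of_nonneg (filter_subset _ _) fun z hz _ => hpos z hz
    _ = 2 := h b x y hxy

end Coloring

variable [LocallyFiniteOrder P]

theorem statement0_general (D : DynkinDiagram Γ) (κ : P → Γ)
    (h1 : G1 D κ) (h2 : G2 D κ) (h3 : G3 κ) (h5 : G5 D κ) :
    G4 D κ := by
  classical
  intro a b hab x hx
  obtain ⟨y', hy'⟩ := exists_isGreatest_color_below h1 h3 hab hx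
  obtain ⟨y, hy⟩ := exists_isLeast_color_above h1 h3 hab hx
  obtain ⟨v, hy'v, hvx⟩ := exists_covBy_le_of_lt hy'.1.2
  obtain ⟨w, hxw, hwy⟩ := exists_le_covBy_of_lt hy.1.2
  rcases hvx.eq_or_lt with rfl | hvx
  · exact ⟨y', hy'.1.1, Or.inr hy'v⟩
  rcases hxw.eq_or_lt with rfl | hxw
  · exact ⟨y, hy.1.1, Or.inl hwy⟩
  exfalso
  have hvxw : {v, x, w} ⊆ {z ∈ Finset.Ioo y' y | D.Adj (κ z) b} := by
    have hv := (adj_of_covBy h2 h5 hy'v).symm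
    have hw := adj_of_covBy h2 h5 hwy
    rw [hy'.1.1] at hv
    rw [hy.1.1] at hw
    simp only [Finset.insert_subset_iff, Finset.singleton_subset_iff, Finset.mem_filter,
      Finset.mem_Ioo, hx]
    exact ⟨⟨⟨hy'v.lt, hvx.trans hy.1.2⟩, hv⟩, ⟨⟨hy'.1.2, hy.1.2⟩, hab⟩,
      ⟨⟨hy'.1.2.trans hxw, hwy.lt⟩, hw⟩⟩
  have hcard := (Finset.card_le_card hvxw).trans
    (h5.ice2.card_adj_le_two (h1.consecutive_of_isGreatest_of_isLeast hab hx hy' hy))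
  rw [Finset.card_eq_three.mpr ⟨v, x, w, hvx.ne, (hvx.trans hxw).ne, hxw.ne, rfl⟩] at hcard
  omega

/-- A Γ-colored poset satisfying G1, G2, G3, and G5 also
satisfies G4. -/
theorem statement0 (D : DynkinDiagram Γ) (κ : P → Γ) (hsurj : Function.Surjective κ)
    (h1 : G1 D κ) (h2 : G2 D κ) (h3 : G3 κ) (h5 : G5 D κ) :
    G4 D κ :=
  statement0_general D κ h1 h2 h3 h5

end GCP
end

section
/- Let P be a Γ-colored poset. Then P satisfies EC, NA, AC, and ICE2 if and only if P satisfies Green's properties G1, G2, and G5. -/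
namespace GCP

variable {Γ : Type*} [Fintype Γ] {P : Type*} [PartialOrder P] [LocallyFiniteOrder P]

/-!
For consecutive `x < y` of color `a` the closed interval adds `θ a a + θ a a = 4` to the open
one, so ICE2 and G5 are the same condition, while G1 is literally EC together with AC. In a
locally finite poset every relation `x ≤ y` is a chain of covers, so NA gives G2. Conversely, G2
writes a cover `x ⋖ y` as a chain of steps inside `[x, y]`, hence as a single step between equal
or adjacent colors; equal colors are excluded by ICE2, because the open interval of a cover is
empty and so has census `0 ≠ 2`.
-/

theorem _root_.Relation.ReflTransGen.of_covBy {α : Type*} [PartialOrder α] {r : α → α → Prop}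
    (hr : r ≤ (· ≤ ·)) {x y : α} (h : Relation.ReflTransGen r x y) (hxy : x ⋖ y) :
    r x y := by
  induction h using Relation.ReflTransGen.head_induction_on with
  | refl => exact absurd hxy.lt (lt_irrefl _)
  | head hxu huy ih =>
    rcases hxy.eq_or_eq (hr _ _ hxu) (Relation.reflTransGen_le_of_le hr _ _ huy) with rfl | rfl
    · exact ih hxy
    · exact hxu

theorem sum_Icc_theta_of_consecutive (D : DynkinDiagram Γ) {κ : P → Γ} {a : Γ} {x y : P}
    (h : Consecutive κ a x y) :
    ∑ z ∈ Finset.Icc x y, D.θ (κ z) a = 4 - ∑ z ∈ Finset.Ioo x y, -D.θ (κ z) a := by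
  obtain ⟨hxy, hx, hy, -⟩ := h
  rw [← Finset.add_sum_Ioc_eq_sum_Icc hxy.le, ← Finset.add_sum_Ioo_eq_sum_Ioc hxy, hx, hy,
    D.diag, Finset.sum_neg_distrib]
  ring

theorem ice2_iff_g5 (D : DynkinDiagram Γ) (κ : P → Γ) : ICE2 D κ ↔ G5 D κ := by
  refine forall₃_congr fun a x y => forall_congr' fun h => ?_
  rw [sum_Icc_theta_of_consecutive D h]
  omega

theorem g1_iff_ec_and_ac {α : Type*} [PartialOrder α] (D : DynkinDiagram Γ) (κ : α → Γ) :
    G1 D κ ↔ EC κ ∧ AC D κ := by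
  refine ⟨fun ⟨hcolor, hadj⟩ => ⟨fun x y hxy => ?_, fun x y hxy => ?_⟩,
    fun ⟨hEC, hAC⟩ => ⟨fun a x hx y hy _ => ?_, fun b c hbc x hx y hy _ => ?_⟩⟩
  · rcases eq_or_ne x y with rfl | hne
    · exact Or.inl le_rfl
    · exact hcolor (κ x) rfl hxy.symm hne
  · rcases eq_or_ne x y with rfl | hne
    · exact Or.inl le_rfl
    · exact hadj _ _ hxy (Or.inl rfl) (Or.inr rfl) hne
  · exact hEC x y (hx.trans hy.symm)
  · rcases hx with hx | hx <;> rcases hy with hy | hy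
    · exact hEC x y (hx.trans hy.symm)
    · exact hAC x y (hx ▸ hy ▸ hbc)
    · exact hAC x y (hx ▸ hy ▸ hbc.symm)
    · exact hEC x y (hx.trans hy.symm)

theorem g2_of_na {D : DynkinDiagram Γ} {κ : P → Γ} (hNA : NA D κ) : G2 D κ := fun x y hxy =>
  Relation.ReflTransGen.mono (fun u v huv => ⟨huv.le, Or.inr (hNA u v huv)⟩) x y
    (le_iff_reflTransGen_covBy.mp hxy)

theorem ne_of_covBy_of_ice2 {D : DynkinDiagram Γ} {κ : P → Γ} (hICE : ICE2 D κ) {x y : P}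
    (hxy : x ⋖ y) : κ x ≠ κ y := by
  intro hcolor
  have hIoo : Finset.Ioo x y = ∅ := by
    rw [← Finset.coe_eq_empty, Finset.coe_Ioo, hxy.Ioo_eq]
  have := hICE (κ x) x y ⟨hxy.lt, rfl, hcolor.symm, by simp [hIoo]⟩
  simp [hIoo] at this

theorem na_of_g2_of_ice2 {D : DynkinDiagram Γ} {κ : P → Γ} (hG2 : G2 D κ) (hICE : ICE2 D κ) :
    NA D κ := fun x y hxy =>
  ((hG2 x y hxy.le).of_covBy (fun _ _ h => h.1) hxy).2.resolve_left
    (ne_of_covBy_of_ice2 hICE hxy)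

theorem statement1_general (D : DynkinDiagram Γ) (κ : P → Γ) :
    (EC κ ∧ NA D κ ∧ AC D κ ∧ ICE2 D κ) ↔ (G1 D κ ∧ G2 D κ ∧ G5 D κ) := by
  rw [g1_iff_ec_and_ac, ← ice2_iff_g5]
  exact ⟨fun ⟨hEC, hNA, hAC, hICE⟩ => ⟨⟨hEC, hAC⟩, g2_of_na hNA, hICE⟩,
    fun ⟨⟨hEC, hAC⟩, hG2, hICE⟩ => ⟨hEC, na_of_g2_of_ice2 hG2 hICE, hAC, hICE⟩⟩

/-- EC, NA, AC, ICE2 hold iff G1, G2, G5 hold. -/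
theorem statement1 (D : DynkinDiagram Γ) (κ : P → Γ) (hsurj : Function.Surjective κ) :
    (EC κ ∧ NA D κ ∧ AC D κ ∧ ICE2 D κ) ↔ (G1 D κ ∧ G2 D κ ∧ G5 D κ) :=
  statement1_general D κ

end GCP
end

section
/- Let P be a Γ-colored poset. Then P satisfies EC, NA, AC, and ICE2 if and only if P satisfies Stembridge's properties S1 and S2. -/
/-!
Both sides say the same thing about incomparable elements (their colors are neither equal nor
adjacent), so the content is in comparing ICE2 with S2. Between consecutive elements `x < y` of
color `a` every color is different from `a`, so only elements of adjacent color contribute to the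
census, each with weight at least one; a census of two therefore comes from two elements of weight
one or from a single element of weight two. In the latter case NA forces that element to be the
whole interval, since the interval contains a cover of `x` and an element covered by `y`, both of
color adjacent to `a`. Conversely, S2 rules out covers of equal color, since their open interval
is empty.
-/

namespace GCP

variable {Γ : Type*} [Fintype Γ] {P : Type*} [PartialOrder P] [LocallyFiniteOrder P]

theorem DynkinDiagram.adj_of_θ_neg {D : DynkinDiagram Γ} {a b : Γ} (h : D.θ a b < 0) :
    D.Adj a b :=
  ⟨fun hab => by rw [hab, D.diag] at h; omega, h⟩

theorem DynkinDiagram.distant_of_ne_of_not_adj {D : DynkinDiagram Γ} {a b : Γ} (hne : a ≠ b)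
    (h : ¬ D.Adj a b) : D.Distant a b :=
  ⟨hne, le_antisymm (D.offdiag_nonpos a b hne) (not_lt.mp fun hlt => h ⟨hne, hlt⟩)⟩

theorem DynkinDiagram.Distant.not_adj {D : DynkinDiagram Γ} {a b : Γ} (h : D.Distant a b) :
    ¬ D.Adj a b :=
  fun hadj => hadj.2.ne h.2

open scoped Classical in
theorem DynkinDiagram.sum_filter_adj_eq {α : Type*} (D : DynkinDiagram Γ) (s : Finset α)
    (c : α → Γ) (a : Γ) (hs : ∀ z ∈ s, c z ≠ a) :
    ∑ z ∈ s.filter (fun z => D.Adj (c z) a), -D.θ (c z) a = ∑ z ∈ s, -D.θ (c z) a :=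
  Finset.sum_filter_of_ne fun z hz hne =>
    ⟨hs z hz, lt_of_le_of_ne (D.offdiag_nonpos _ _ (hs z hz)) (by omega)⟩

theorem _root_.Finset.eq_pair_or_eq_singleton_of_sum_eq_two {α : Type*} [DecidableEq α]
    {s : Finset α} {f : α → ℤ} (hf : ∀ z ∈ s, 1 ≤ f z) (hsum : ∑ z ∈ s, f z = 2) :
    (∃ u v, u ≠ v ∧ s = {u, v} ∧ f u = 1 ∧ f v = 1) ∨ ∃ w, s = {w} ∧ f w = 2 := by
  have hcard : s.card ≤ 2 := by
    have := s.card_nsmul_le_sum f 1 hf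
    simp only [nsmul_eq_mul, mul_one, hsum] at this
    omega
  interval_cases h : s.card
  · simp_all [Finset.card_eq_zero]
  · obtain ⟨w, rfl⟩ := Finset.card_eq_one.mp h
    exact Or.inr ⟨w, rfl, by simpa using hsum⟩
  · obtain ⟨u, v, huv, rfl⟩ := Finset.card_eq_two.mp h
    rw [Finset.sum_pair huv] at hsum
    have hu := hf u (by simp)
    have hv := hf v (by simp)
    exact Or.inl ⟨u, v, huv, rfl, by omega, by omega⟩

section Order

variable {Q : Type*} [PartialOrder Q] {D : DynkinDiagram Γ} {κ : Q → Γ}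

theorem S1_of_EC_of_NA_of_AC (hEC : EC κ) (hNA : NA D κ) (hAC : AC D κ) : S1 D κ :=
  ⟨fun x y hxy => Or.inr (hNA x y hxy), fun x y hxy hyx =>
    DynkinDiagram.distant_of_ne_of_not_adj (fun h => (hEC x y h).elim hxy hyx)
      (fun h => (hAC x y h).elim hxy hyx)⟩

theorem S1.EC (h : S1 D κ) : EC κ := fun x y hxy => by
  by_contra! hc
  exact (h.2 x y hc.1 hc.2).1 hxy

theorem S1.AC (h : S1 D κ) : AC D κ := fun x y hxy => by
  by_contra! hc
  exact (h.2 x y hc.1 hc.2).not_adj hxy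

end Order

section Coloring

variable {D : DynkinDiagram Γ} {κ : P → Γ}

open scoped Classical in
theorem NA.Ioo_eq_singleton_of_filter_adj (hNA : NA D κ) {a : Γ} {x y w : P} (hx : κ x = a)
    (hy : κ y = a) (hw : (Finset.Ioo x y).filter (fun z => D.Adj (κ z) a) = {w}) :
    Finset.Ioo x y = {w} := by
  have eq_w : ∀ m ∈ Finset.Ioo x y, D.Adj (κ m) a → m = w := fun m hm hadj =>
    Finset.mem_singleton.mp (hw ▸ Finset.mem_filter.mpr ⟨hm, hadj⟩)
  refine Finset.eq_singleton_iff_unique_mem.mpr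
    ⟨(Finset.mem_filter.mp (hw ▸ Finset.mem_singleton_self w)).1, fun z hz => ?_⟩
  rw [Finset.mem_Ioo] at hz
  obtain ⟨m, hxm, hmz⟩ := exists_covBy_le_of_lt hz.1
  obtain ⟨m', hzm', hm'y⟩ := exists_le_covBy_of_lt hz.2
  have hm : m = w :=
    eq_w m (Finset.mem_Ioo.mpr ⟨hxm.lt, hmz.trans_lt hz.2⟩) (hx ▸ (hNA x m hxm).symm)
  have hm' : m' = w :=
    eq_w m' (Finset.mem_Ioo.mpr ⟨hz.1.trans_le hzm', hm'y.lt⟩) (hy ▸ hNA m' y hm'y)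
  exact le_antisymm (hm' ▸ hzm') (hm ▸ hmz)

theorem S2_of_NA_of_ICE2 (hNA : NA D κ) (hICE : ICE2 D κ) : S2 D κ := by
  classical
  intro a x y hc
  set T := (Finset.Ioo x y).filter (fun z => D.Adj (κ z) a)
  have hsum : ∑ z ∈ T, -D.θ (κ z) a = 2 :=
    (D.sum_filter_adj_eq _ κ a hc.2.2.2).trans (hICE a x y hc)
  have hpos : ∀ z ∈ T, 1 ≤ -D.θ (κ z) a := fun z hz => by
    have := (Finset.mem_filter.mp hz).2.2
    omega
  rcases Finset.eq_pair_or_eq_singleton_of_sum_eq_two hpos hsum with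
    ⟨u, v, huv, hT, hu, hv⟩ | ⟨w, hT, hw⟩
  · have mem_T : ∀ {z}, z ∈ T ↔ z ∈ Finset.Ioo x y ∧ D.Adj (κ z) a := Finset.mem_filter
    refine Or.inl ⟨u, (mem_T.mp (by simp [hT])).1, v, (mem_T.mp (by simp [hT])).1, huv,
      by omega, by omega, fun z hz hadj => ?_⟩
    simpa [hT] using mem_T.mpr ⟨hz, hadj⟩
  · exact Or.inr ⟨w, hNA.Ioo_eq_singleton_of_filter_adj hc.2.1 hc.2.2.1 hT, by omega⟩

theorem S2.Ioo_nonempty (h : S2 D κ) {a : Γ} {x y : P} (hc : Consecutive κ a x y) :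
    (Finset.Ioo x y).Nonempty := by
  rcases h a x y hc with ⟨u, hu, -⟩ | ⟨w, hw, -⟩
  · exact ⟨u, hu⟩
  · exact hw ▸ Finset.singleton_nonempty w

theorem NA_of_S1_of_S2 (h1 : S1 D κ) (h2 : S2 D κ) : NA D κ := fun x y hxy =>
  (h1.1 x y hxy).resolve_left fun heq => by
    have not_mem : ∀ z ∈ Finset.Ioo x y, False := fun z hz =>
      hxy.2 (Finset.mem_Ioo.mp hz).1 (Finset.mem_Ioo.mp hz).2
    obtain ⟨z, hz⟩ := h2.Ioo_nonempty ⟨hxy.lt, heq, rfl, fun z hz => (not_mem z hz).elim⟩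
    exact not_mem z hz

theorem ICE2_of_S2 (h : S2 D κ) : ICE2 D κ := by
  classical
  intro a x y hc
  rcases h a x y hc with ⟨u, hu, v, hv, huv, hθu, hθv, hall⟩ | ⟨w, hw, hθw⟩
  · have hT : (Finset.Ioo x y).filter (fun z => D.Adj (κ z) a) = {u, v} := by
      ext z
      simp only [Finset.mem_filter, Finset.mem_insert, Finset.mem_singleton]
      refine ⟨fun hz => hall z hz.1 hz.2, ?_⟩
      rintro (rfl | rfl)
      exacts [⟨hu, DynkinDiagram.adj_of_θ_neg (by omega)⟩,
        ⟨hv, DynkinDiagram.adj_of_θ_neg (by omega)⟩]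
    rw [← D.sum_filter_adj_eq _ κ a hc.2.2.2, hT, Finset.sum_pair huv, hθu, hθv]
    rfl
  · rw [hw, Finset.sum_singleton, hθw]
    rfl

end Coloring

theorem statement2_general (D : DynkinDiagram Γ) (κ : P → Γ) :
    (EC κ ∧ NA D κ ∧ AC D κ ∧ ICE2 D κ) ↔ (S1 D κ ∧ S2 D κ) :=
  ⟨fun ⟨hEC, hNA, hAC, hICE⟩ => ⟨S1_of_EC_of_NA_of_AC hEC hNA hAC, S2_of_NA_of_ICE2 hNA hICE⟩,
    fun ⟨h1, h2⟩ => ⟨h1.EC, NA_of_S1_of_S2 h1 h2, h1.AC, ICE2_of_S2 h2⟩⟩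

/-- EC, NA, AC, ICE2 hold iff S1 and S2 hold. -/
theorem statement2 (D : DynkinDiagram Γ) (κ : P → Γ) (hsurj : Function.Surjective κ) :
    (EC κ ∧ NA D κ ∧ AC D κ ∧ ICE2 D κ) ↔ (S1 D κ ∧ S2 D κ) :=
  statement2_general D κ

end GCP
end

section
/- Let P be a finite Γ-colored poset that satisfies NA. If P satisfies Stembridge's properties S3 and S4, then P satisfies UCB1. -/
namespace GCP

variable {Γ : Type*} [Fintype Γ] {P : Type*} [PartialOrder P] [LocallyFiniteOrder P]

/- If `b ≠ c`, the walk, shortened to a path and prefixed by the edge `a b`, would be a second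
path from `a` to `c` besides the edge `a c`. -/
theorem _root_.SimpleGraph.IsAcyclic.eq_of_adj_of_adj_of_walk {V : Type*} {G : SimpleGraph V}
    (hG : G.IsAcyclic) {a b c : V} (hab : G.Adj a b) (hac : G.Adj a c) (p : G.Walk b c)
    (hp : a ∉ p.support) : b = c := by
  classical
  have hpath : (SimpleGraph.Walk.cons hab p.bypass).IsPath :=
    p.bypass_isPath.cons fun h => hp (p.support_bypass_subset_support h)
  have hunique := (SimpleGraph.isAcyclic_iff_subsingleton_path.mp hG a c).elim
    ⟨_, hpath⟩ (SimpleGraph.Path.singleton hac)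
  have hlen := congrArg (fun q : G.Path a c => q.1.length) hunique
  simp only [SimpleGraph.Walk.length_cons, SimpleGraph.Path.singleton_coe,
    SimpleGraph.Walk.length_nil, zero_add, add_eq_right] at hlen
  exact SimpleGraph.Walk.eq_of_length_eq_zero hlen

theorem exists_walk_of_le (D : DynkinDiagram Γ) (κ : P → Γ) (hNA : NA D κ) {z y : P}
    (hzy : z ≤ y) : ∃ p : D.graph.Walk (κ z) (κ y), ∀ c ∈ p.support, ∃ w, z ≤ w ∧ κ w = c := by
  induction le_iff_reflTransGen_covBy.mp hzy using Relation.ReflTransGen.head_induction_on with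
  | refl => exact ⟨.nil, fun c hc => ⟨y, le_rfl, (List.mem_singleton.mp hc).symm⟩⟩
  | head hcov hwy ih =>
    obtain ⟨p, hp⟩ := ih (le_iff_reflTransGen_covBy.mpr hwy)
    refine ⟨.cons (hNA _ _ hcov) p, ?_⟩
    rintro c (_ | ⟨_, hc⟩)
    · exact ⟨_, le_rfl, rfl⟩
    · obtain ⟨w, hw, rfl⟩ := hp c hc
      exact ⟨w, hcov.le.trans hw, rfl⟩

/- The unique cover `z` of `x` is maximal in its color, so a walk from `κ z` to `κ y` through
colors of elements above `z` never meets `κ x`; acyclicity then forces `κ z = κ y`. -/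
theorem covBy_of_mem_USet (D : DynkinDiagram Γ) (κ : P → Γ) (hNA : NA D κ) (hS3 : S3 D κ)
    (hS4 : S4 D) {x y : P} (hx : ∀ w : P, κ w = κ x → ¬ x < w) (hy : y ∈ USet D κ Set.univ x) :
    x ⋖ y := by
  obtain ⟨-, hxy, hadj⟩ := hy
  obtain ⟨z, hxz, hzy⟩ := exists_covBy_le_of_lt hxy
  obtain rfl | hzy := hzy.eq_or_lt
  · exact hxz
  have hz_max := ((hS3 x hx).2 z hxz).2
  obtain ⟨p, hp⟩ := exists_walk_of_le D κ hNA hzy.le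
  have hxp : κ x ∉ p.support := fun h => by
    obtain ⟨w, hzw, hw⟩ := hp _ h
    exact hx w hw (hxz.lt.trans_le hzw)
  have hzy_color : κ z = κ y := hS4.eq_of_adj_of_adj_of_walk (hNA x z hxz) hadj.symm p hxp
  exact absurd hzy (hz_max y hzy_color.symm)

theorem statement4_general [Finite P] (D : DynkinDiagram Γ) (κ : P → Γ)
    (hNA : NA D κ) (hS3 : S3 D κ) (hS4 : S4 D) :
    UCB D κ 1 := by
  intro x hx
  have hfin : (USet D κ Set.univ x).Finite := Set.toFinite _
  refine ⟨hfin, ?_⟩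
  have hcov : ∀ y ∈ hfin.toFinset, x ⋖ y := fun y hy =>
    covBy_of_mem_USet D κ hNA hS3 hS4 hx (hfin.mem_toFinset.mp hy)
  have hcard : hfin.toFinset.card ≤ 1 := Finset.card_le_one.mpr fun y hy z hz =>
    (hS3 x hx).1 y z (hcov y hy) (hcov z hz)
  calc ∑ y ∈ hfin.toFinset, -D.θ (κ y) (κ x)
      = ∑ y ∈ hfin.toFinset, 1 := Finset.sum_congr rfl fun y hy => by
        rw [((hS3 x hx).2 y (hcov y hy)).1, neg_neg]
    _ ≤ 1 := by simpa using hcard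

/-- a finite Γ-colored poset satisfying NA, S3, and S4 satisfies
UCB1. -/
theorem statement4 [Finite P] (D : DynkinDiagram Γ) (κ : P → Γ)
    (hsurj : Function.Surjective κ) (hNA : NA D κ) (hS3 : S3 D κ) (hS4 : S4 D) :
    UCB D κ 1 :=
  statement4_general D κ hNA hS3 hS4

end GCP
end

section
/- Let P be a finite Γ-colored poset that satisfies NA. If P satisfies UCB1 and also AC, then P satisfies Stembridge's properties S3 and S4. -/
/-!
Let `x` be maximal among the elements of its color. Each element of `U(x)` contributes at least
`1` to a census that UCB1 bounds by `1`, so `U(x)` has at most one element, and its color is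
`1`-adjacent to that of `x`. By NA every cover of `x` lies in `U(x)`, which gives S3.

For S4, choose for each color an element maximal in that color. A cycle of colors would contain
a color whose representative is minimal among the representatives of the cycle; by AC the
representatives of its two neighbours on the cycle lie above it, hence both in its `U`, which is
impossible.
-/

namespace GCP

variable {Γ : Type*} [Fintype Γ] {P : Type*} [PartialOrder P] [LocallyFiniteOrder P]

theorem _root_.SimpleGraph.Walk.IsCycle.exists_ne_toSubgraph_adj {V : Type*} {G : SimpleGraph V}
    {u v : V} {c : G.Walk u u} (hc : c.IsCycle) (hv : v ∈ c.support) :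
    ∃ w₁ w₂, w₁ ≠ w₂ ∧ c.toSubgraph.Adj v w₁ ∧ c.toSubgraph.Adj v w₂ := by
  obtain ⟨w₁, w₂, hne, hnbr⟩ := Set.ncard_eq_two.mp (hc.ncard_neighborSet_toSubgraph_eq_two hv)
  refine ⟨w₁, w₂, hne, ?_, ?_⟩ <;>
    rw [← SimpleGraph.Subgraph.mem_neighborSet, hnbr] <;> simp

theorem _root_.SimpleGraph.isAcyclic_of_forall_exists_subsingleton_adj {V : Type*}
    {G : SimpleGraph V}
    (h : ∀ S : Finset V, S.Nonempty → ∃ v ∈ S, {w | w ∈ S ∧ G.Adj v w}.Subsingleton) :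
    G.IsAcyclic := by
  classical
  intro u c hc
  obtain ⟨v, hv, hsub⟩ := h c.support.toFinset ⟨u, by simp⟩
  obtain ⟨w₁, w₂, hne, h₁, h₂⟩ := hc.exists_ne_toSubgraph_adj (List.mem_toFinset.mp hv)
  have mem (w : V) (hw : c.toSubgraph.Adj v w) : w ∈ {w | w ∈ c.support.toFinset ∧ G.Adj v w} :=
    ⟨List.mem_toFinset.mpr (c.mem_verts_toSubgraph.mp hw.snd_mem), hw.adj_sub⟩
  exact hne (hsub (mem w₁ h₁) (mem w₂ h₂))

section

omit [LocallyFiniteOrder P]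

def IsColorMaximal (κ : P → Γ) (x : P) : Prop := ∀ y : P, κ y = κ x → ¬ x < y

omit [Fintype Γ] in
theorem exists_isColorMaximal [Finite P] {κ : P → Γ} (hsurj : Function.Surjective κ) (a : Γ) :
    ∃ x, κ x = a ∧ IsColorMaximal κ x := by
  obtain ⟨x₀, hx₀⟩ := hsurj a
  obtain ⟨x, hx⟩ := (Set.toFinite {x : P | κ x = a}).exists_maximal ⟨x₀, hx₀⟩
  exact ⟨x, hx.prop, fun y hy => hx.not_gt (hy.trans hx.prop)⟩

theorem one_le_neg_theta_of_mem_USet {D : DynkinDiagram Γ} {κ : P → Γ} {S : Set P} {x y : P}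
    (hy : y ∈ USet D κ S x) : 1 ≤ -D.θ (κ y) (κ x) := by
  have := hy.2.2.2
  omega

namespace UCB

variable {D : DynkinDiagram Γ} {κ : P → Γ}

theorem USet_subsingleton (hUCB : UCB D κ 1) {x : P} (hx : IsColorMaximal κ x) :
    (USet D κ Set.univ x).Subsingleton := by
  obtain ⟨hfin, hsum⟩ := hUCB x hx
  have hcard : hfin.toFinset.card • (1 : ℤ) ≤ 1 :=
    (Finset.card_nsmul_le_sum _ _ _ fun y hy =>
      one_le_neg_theta_of_mem_USet (hfin.mem_toFinset.mp hy)).trans (mod_cast hsum)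
  simp only [nsmul_eq_mul, mul_one, Nat.cast_le_one] at hcard
  intro y hy z hz
  exact Finset.card_le_one.mp hcard y (hfin.mem_toFinset.mpr hy) z (hfin.mem_toFinset.mpr hz)

theorem theta_eq_neg_one (hUCB : UCB D κ 1) {x y : P} (hx : IsColorMaximal κ x)
    (hy : y ∈ USet D κ Set.univ x) : D.θ (κ y) (κ x) = -1 := by
  obtain ⟨hfin, hsum⟩ := hUCB x hx
  have hle : -D.θ (κ y) (κ x) ≤ ∑ z ∈ hfin.toFinset, -D.θ (κ z) (κ x) :=
    Finset.single_le_sum (fun z hz => zero_le_one.trans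
      (one_le_neg_theta_of_mem_USet (hfin.mem_toFinset.mp hz))) (hfin.mem_toFinset.mpr hy)
  have := one_le_neg_theta_of_mem_USet hy
  push_cast at hsum
  omega

theorem s3 (hUCB : UCB D κ 1) (hNA : NA D κ) : S3 D κ := by
  intro x hx
  have cover_mem {y : P} (hy : x ⋖ y) : y ∈ USet D κ Set.univ x :=
    ⟨trivial, hy.lt, (hNA x y hy).symm⟩
  refine ⟨fun y z hy hz => hUCB.USet_subsingleton hx (cover_mem hy) (cover_mem hz),
    fun y hy => ⟨hUCB.theta_eq_neg_one hx (cover_mem hy), fun z hz hyz => hyz.ne ?_⟩⟩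
  exact hUCB.USet_subsingleton hx (cover_mem hy)
    ⟨trivial, hy.lt.trans hyz, hz ▸ (hNA x y hy).symm⟩

theorem s4 [Finite P] (hUCB : UCB D κ 1) (hsurj : Function.Surjective κ) (hAC : AC D κ) :
    S4 D := by
  choose rep hrep_color hrep_max using exists_isColorMaximal (Γ := Γ) hsurj
  refine SimpleGraph.isAcyclic_of_forall_exists_subsingleton_adj fun S hS => ?_
  obtain ⟨a, haS, hmin⟩ := S.exists_minimalFor rep hS
  have above {b : Γ} (hb : b ∈ S ∧ D.graph.Adj a b) : rep b ∈ USet D κ Set.univ (rep a) := by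
    have hadj : D.Adj (κ (rep b)) (κ (rep a)) := by
      rw [hrep_color, hrep_color]
      exact hb.2.symm
    refine ⟨trivial, ?_, hadj⟩
    rcases hAC _ _ hadj with hle | hle
    · exact absurd (le_antisymm hle (hmin hb.1 hle)) fun h => hadj.1 (congrArg κ h)
    · exact hle.lt_of_ne fun h => hadj.1 (congrArg κ h).symm
  refine ⟨a, haS, fun b hb c hc => ?_⟩
  rw [← hrep_color b, hUCB.USet_subsingleton (hrep_max a) (above hb) (above hc), hrep_color]

end UCB

end

/-- a finite Γ-colored poset satisfying NA, UCB1, and AC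
satisfies S3 and S4. -/
theorem statement5 [Finite P] (D : DynkinDiagram Γ) (κ : P → Γ)
    (hsurj : Function.Surjective κ) (hNA : NA D κ) (hUCB : UCB D κ 1) (hAC : AC D κ) :
    S3 D κ ∧ S4 D :=
  ⟨hUCB.s3 hNA, hUCB.s4 hsurj hAC⟩

end GCP
end

section
/- Let P be a Γ-colored d-complete poset, let I be an order ideal of P, let F = P − I be the corresponding order filter, and let a be a color. Suppose the upper frontier census U_a(I) is defined (i.e., P_a ∩ I has a maximal element x and U(x,I) is finite). Then (i) U_a(I) ∈ {0,1,2}, and (ii) U_a(I) = 2 if and only if F contains an element of color a that is a minimal element of F. -/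
namespace GCP

variable {Γ : Type*} [Fintype Γ] {P : Type*} [PartialOrder P] [LocallyFiniteOrder P]

/-!
Let `x` be the top element of color `a` in `I`. If `x` is the top of all of `P_a`, then `U(x, I)`
sits inside `U(x, P)`, whose census is at most `1` by UCB1, and `F` has no element of color `a`.
Otherwise let `y` be the next element of color `a`; it lies in `F`. By AC every element of
`U(x, I)` lies strictly between `x` and `y`, so the census is part of the ICE2 sum `2` over
`(x, y)`, and it is all of it exactly when every element of `(x, y)` of color adjacent to `a`
is in `I`. That in turn says that `y` is minimal in `F`: an element of `F` below `y` would give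
an element of `F` covered by `y`, of color adjacent to `a` by NA, hence above `x` by AC.
Finally, by EC, `y` is the only candidate for a minimal element of `F` of color `a`.
-/

theorem _root_.IsLowerSet.lt_of_mem_of_notMem {α : Type*} [PartialOrder α] {I : Set α}
    (hI : IsLowerSet I) {x z : α} (hx : x ∈ I) (hz : z ∉ I) (hxz : x ≤ z ∨ z ≤ x) : x < z := by
  rcases hxz with hxz | hzx
  · exact hxz.lt_of_ne fun h => hz (h ▸ hx)
  · exact absurd (hI hzx hx) hz

theorem _root_.IsLowerSet.exists_notMem_covBy_of_lt {α : Type*} [PartialOrder α]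
    [IsStronglyCoatomic α] {I : Set α} (hI : IsLowerSet I) {y z : α} (hz : z ∉ I) (hzy : z < y) :
    ∃ w ∉ I, w ⋖ y := by
  obtain ⟨w, hzw, hwy⟩ := exists_le_covBy_of_lt hzy
  exact ⟨w, fun hw => hz (hI hzw hw), hwy⟩

theorem _root_.Finset.sum_eq_sum_iff_of_subset_of_nonneg {ι M : Type*} [AddCommMonoid M]
    [PartialOrder M] [IsOrderedCancelAddMonoid M] {s t : Finset ι} {f : ι → M} (hst : s ⊆ t)
    (hf : ∀ i ∈ t, i ∉ s → 0 ≤ f i) :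
    ∑ i ∈ s, f i = ∑ i ∈ t, f i ↔ ∀ i ∈ t, i ∉ s → f i = 0 := by
  classical
  have hf' : ∀ i ∈ t \ s, 0 ≤ f i := fun i hi =>
    hf i (Finset.mem_sdiff.mp hi).1 (Finset.mem_sdiff.mp hi).2
  rw [← Finset.sum_sdiff hst, eq_comm, add_eq_right, Finset.sum_eq_zero_iff_of_nonneg hf']
  simp only [Finset.mem_sdiff, and_imp]

namespace DynkinDiagram

variable (D : DynkinDiagram Γ) {b c : Γ}

theorem neg_θ_nonneg (h : b ≠ c) : 0 ≤ -D.θ b c := by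
  linarith [D.offdiag_nonpos b c h]

theorem θ_eq_zero_of_not_adj (h : b ≠ c) (hbc : ¬ D.Adj b c) : D.θ b c = 0 :=
  (D.offdiag_nonpos b c h).antisymm (not_lt.mp fun hlt => hbc ⟨h, hlt⟩)

end DynkinDiagram

section Census

variable {D : DynkinDiagram Γ} {κ : P → Γ} {I : Set P} {a : Γ} {x y : P}

omit [Fintype Γ] in
theorem exists_consecutive_of_lt (hx : κ x = a) (hy : κ y = a) (hxy : x < y) :
    ∃ y', Consecutive κ a x y' := by
  obtain ⟨y', ⟨⟨hxy', hy'y⟩, hy'⟩, hmin⟩ :=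
    ((Set.finite_Ioc x y).subset fun z hz => hz.1 : {z | z ∈ Set.Ioc x y ∧ κ z = a}.Finite)
      |>.exists_minimal ⟨y, ⟨hxy, le_rfl⟩, hy⟩
  refine ⟨y', hxy', hx, hy', fun z hz hza => ?_⟩
  obtain ⟨hxz, hzy'⟩ := Finset.mem_Ioo.mp hz
  exact (hmin ⟨⟨hxz, hzy'.le.trans hy'y⟩, hza⟩ hzy'.le).not_gt hzy'

omit [LocallyFiniteOrder P] in
theorem census_nonneg (hfin : (USet D κ I x).Finite) :
    0 ≤ ∑ z ∈ hfin.toFinset, -D.θ (κ z) (κ x) :=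
  Finset.sum_nonneg fun _ hz => D.neg_θ_nonneg ((hfin.mem_toFinset.mp hz).2.2.1)

omit [LocallyFiniteOrder P] in
theorem census_le_of_UCB {k : ℕ} (hUCB : UCB D κ k) (hmax : ∀ y, κ y = κ x → ¬ x < y)
    (hfin : (USet D κ I x).Finite) : ∑ z ∈ hfin.toFinset, -D.θ (κ z) (κ x) ≤ k := by
  obtain ⟨hfinP, hle⟩ := hUCB x hmax
  refine le_trans (Finset.sum_le_sum_of_subset_of_nonneg ?_ fun z hz _ => ?_) hle
  · exact hfin.toFinset_subset_toFinset.mpr fun z hz => ⟨trivial, hz.2⟩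
  · exact D.neg_θ_nonneg ((hfinP.mem_toFinset.mp hz).2.2.1)

theorem toFinset_USet_subset_Ioo (hAC : AC D κ) (hI : IsLowerSet I) (hcons : Consecutive κ a x y)
    (hyI : y ∉ I) (hfin : (USet D κ I x).Finite) : hfin.toFinset ⊆ Finset.Ioo x y := by
  intro z hz
  obtain ⟨hzI, hxz, hadj⟩ := hfin.mem_toFinset.mp hz
  have hcomp : z ≤ y ∨ y ≤ z := hAC z y (by rwa [hcons.2.2.1, ← hcons.2.1])
  exact Finset.mem_Ioo.mpr ⟨hxz, hI.lt_of_mem_of_notMem hzI hyI hcomp⟩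

variable (hAC : AC D κ) (hICE2 : ICE2 D κ) (hI : IsLowerSet I) (hcons : Consecutive κ a x y)
  (hyI : y ∉ I) (hfin : (USet D κ I x).Finite)
include hAC hICE2 hI hcons hyI

theorem census_le_two : ∑ z ∈ hfin.toFinset, -D.θ (κ z) a ≤ 2 :=
  hICE2 a x y hcons ▸ Finset.sum_le_sum_of_subset_of_nonneg
    (toFinset_USet_subset_Ioo hAC hI hcons hyI hfin) fun z hz _ =>
      D.neg_θ_nonneg (hcons.2.2.2 z hz)

theorem census_eq_two_iff :
    ∑ z ∈ hfin.toFinset, -D.θ (κ z) a = 2 ↔ ∀ z ∈ Finset.Ioo x y, D.Adj (κ z) a → z ∈ I := by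
  rw [← hICE2 a x y hcons, Finset.sum_eq_sum_iff_of_subset_of_nonneg
    (toFinset_USet_subset_Ioo hAC hI hcons hyI hfin) fun z hz _ =>
      D.neg_θ_nonneg (hcons.2.2.2 z hz)]
  refine forall₂_congr fun z hz => ?_
  have hmem : z ∈ hfin.toFinset ↔ z ∈ I ∧ D.Adj (κ z) a := by
    rw [hfin.mem_toFinset, ← hcons.2.1]
    exact ⟨fun h => ⟨h.1, h.2.2⟩, fun h => ⟨h.1, (Finset.mem_Ioo.mp hz).1, h.2⟩⟩
  have hθ : -D.θ (κ z) a = 0 ↔ ¬ D.Adj (κ z) a :=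
    ⟨fun h hadj => by linarith [hadj.2],
      fun h => by rw [D.θ_eq_zero_of_not_adj (hcons.2.2.2 z hz) h, neg_zero]⟩
  rw [hmem, hθ]
  tauto

omit hICE2 hyI in
theorem forall_adj_mem_Ioo_iff_forall_compl_not_lt (hNA : NA D κ) (hxI : x ∈ I) :
    (∀ z ∈ Finset.Ioo x y, D.Adj (κ z) a → z ∈ I) ↔ ∀ z ∈ Iᶜ, ¬ z < y := by
  refine ⟨fun hadjI z hzI hzy => ?_, fun hmin z hz _ => not_not.mp fun hzI =>
    hmin z hzI (Finset.mem_Ioo.mp hz).2⟩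
  obtain ⟨w, hwI, hwy⟩ := hI.exists_notMem_covBy_of_lt hzI hzy
  have hadj : D.Adj (κ w) a := hcons.2.2.1 ▸ hNA w y hwy
  have hxw : x < w := hI.lt_of_mem_of_notMem hxI hwI (hAC x w (hcons.2.1 ▸ hadj.symm))
  exact hwI (hadjI w (Finset.mem_Ioo.mpr ⟨hxw, hwy.lt⟩) hadj)

end Census

omit [Fintype Γ] in
theorem exists_minimal_compl_iff_of_consecutive {κ : P → Γ} {I : Set P} {a : Γ} {x y : P}
    (hEC : EC κ) (hI : IsLowerSet I) (hcons : Consecutive κ a x y) (hxI : x ∈ I) (hyI : y ∉ I) :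
    (∃ w ∈ Iᶜ, κ w = a ∧ ∀ z ∈ Iᶜ, ¬ z < w) ↔ ∀ z ∈ Iᶜ, ¬ z < y := by
  refine ⟨fun ⟨w, hwI, hwa, hwmin⟩ => ?_, fun hymin => ⟨y, hyI, hcons.2.2.1, hymin⟩⟩
  have hxw : x < w := hI.lt_of_mem_of_notMem hxI hwI (hEC x w (hcons.2.1.trans hwa.symm))
  rcases hEC w y (hwa.trans hcons.2.2.1.symm) with hwy | hyw
  · rcases hwy.lt_or_eq with hwy | rfl
    · exact absurd hwa (hcons.2.2.2 w (Finset.mem_Ioo.mpr ⟨hxw, hwy⟩))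
    · exact hwmin
  · rcases hyw.lt_or_eq with hyw | rfl
    · exact absurd hyw (hwmin y hyI)
    · exact hwmin

theorem statement7_general (D : DynkinDiagram Γ) (κ : P → Γ)
    (hdc : DComplete D κ) (I : Set P) (hI : IsLowerSet I) (a : Γ) (x : P)
    (hxI : x ∈ I) (hxa : κ x = a) (hxmax : ∀ y ∈ I, κ y = a → ¬ x < y)
    (hfin : (USet D κ I x).Finite) :
    (∑ y ∈ hfin.toFinset, (-D.θ (κ y) a)) ∈ ({0, 1, 2} : Set ℤ) ∧
      ((∑ y ∈ hfin.toFinset, (-D.θ (κ y) a)) = 2 ↔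
        ∃ y ∈ Iᶜ, κ y = a ∧ ∀ z ∈ Iᶜ, ¬ z < y) := by
  obtain ⟨hEC, hNA, hAC, hICE2, hUCB⟩ := hdc
  subst hxa
  have hnonneg := census_nonneg hfin
  simp only [Set.mem_insert_iff, Set.mem_singleton_iff]
  by_cases htop : ∀ y, κ y = κ x → ¬ x < y
  · have hle := census_le_of_UCB hUCB htop hfin
    refine ⟨by omega, iff_of_false (by omega) fun ⟨w, hwI, hwa, _⟩ => ?_⟩
    exact htop w hwa (hI.lt_of_mem_of_notMem hxI hwI (hEC x w hwa.symm))
  · push Not at htop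
    obtain ⟨y₀, hy₀, hxy₀⟩ := htop
    obtain ⟨y, hcons⟩ := exists_consecutive_of_lt rfl hy₀ hxy₀
    have hyI : y ∉ I := fun hyI => hxmax y hyI hcons.2.2.1 hcons.1
    have hle := census_le_two hAC hICE2 hI hcons hyI hfin
    refine ⟨by omega, ?_⟩
    rw [census_eq_two_iff hAC hICE2 hI hcons hyI hfin,
      forall_adj_mem_Ioo_iff_forall_compl_not_lt hAC hI hcons hNA hxI,
      exists_minimal_compl_iff_of_consecutive hEC hI hcons hxI hyI]

/-- the upper frontier census of an ideal, when defined, lies in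
`{0,1,2}`, and equals `2` iff the complementary filter has a minimal element of
color `a`. -/
theorem statement7 (D : DynkinDiagram Γ) (κ : P → Γ) (hsurj : Function.Surjective κ)
    (hdc : DComplete D κ) (I : Set P) (hI : IsLowerSet I) (a : Γ) (x : P)
    (hxI : x ∈ I) (hxa : κ x = a) (hxmax : ∀ y ∈ I, κ y = a → ¬ x < y)
    (hfin : (USet D κ I x).Finite) :
    (∑ y ∈ hfin.toFinset, (-D.θ (κ y) a)) ∈ ({0, 1, 2} : Set ℤ) ∧
      ((∑ y ∈ hfin.toFinset, (-D.θ (κ y) a)) = 2 ↔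
        ∃ y ∈ Iᶜ, κ y = a ∧ ∀ z ∈ Iᶜ, ¬ z < y) :=
  statement7_general D κ hdc I hI a x hxI hxa hxmax hfin

end GCP
end

section
/- Let P be a Γ-colored d-complete poset, let I be an order ideal of P, let F = P − I be the corresponding order filter, and let a be a color. Suppose I contains an element of color a and the lower frontier census L_a(F) is defined (i.e., P_a ∩ F has a minimal element x and L(x,F) is finite). Then (i) L_a(F) ∈ {0,1,2}, and (ii) L_a(F) = 2 if and only if I contains an element of color a that is a maximal element of I. -/
namespace GCP

variable {Γ : Type*} [Fintype Γ] {P : Type*} [PartialOrder P] [LocallyFiniteOrder P]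

/-
Let `w` be the largest element of color `a` in `I` (it exists since `P_a` is a chain and intervals
are finite) and `x` the smallest one in `F`, so `w < x` are consecutive of color `a` and ICE2 says
that the census of `(w, x)` is `2`. By AC every element below `x` of color adjacent to `a` lies
above `w`, so this census splits as `L_a(F)` plus the census of the part of `(w, x)` lying in `I`.
Both are nonnegative, and the latter vanishes exactly when `w` is maximal in `I`, because by NA
an element of `I` covering `w` has color adjacent to `a`.
-/

theorem DynkinDiagram.θ_eq_zero_of_not_adj_s8 (D : DynkinDiagram Γ) {b a : Γ} (hne : b ≠ a)
    (h : ¬ D.Adj b a) : D.θ b a = 0 :=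
  le_antisymm (D.offdiag_nonpos b a hne) (not_lt.mp fun hlt => h ⟨hne, hlt⟩)

theorem DynkinDiagram.card_le_sum_neg_θ (D : DynkinDiagram Γ) {ι : Type*} {s : Finset ι}
    {f : ι → Γ} {a : Γ} (hs : ∀ i ∈ s, D.Adj (f i) a) :
    (s.card : ℤ) ≤ ∑ i ∈ s, -D.θ (f i) a := by
  simpa using s.card_nsmul_le_sum (fun i => -D.θ (f i) a) 1 fun i hi => by
    have := (hs i hi).2; omega

theorem _root_.IsLowerSet.lt_of_le_or_le {α : Type*} [PartialOrder α] {I : Set α}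
    (hI : IsLowerSet I) {y x : α} (hy : y ∈ I) (hx : x ∉ I) (h : y ≤ x ∨ x ≤ y) : y < x := by
  rcases h with h | h
  · exact h.lt_of_ne fun hyx => hx (hyx ▸ hy)
  · exact absurd (hI h hy) hx

theorem _root_.IsGreatest.exists_maximal_iff {α β : Type*} [PartialOrder α] {c : α → β} {a : β}
    {I : Set α} {w : α} (hw : IsGreatest {y ∈ I | c y = a} w) :
    (∃ y ∈ I, c y = a ∧ ∀ z ∈ I, ¬ y < z) ↔ Maximal (· ∈ I) w := by
  refine ⟨fun ⟨y, hy, hya, hymax⟩ => ?_, fun hmax => ⟨w, hw.1.1, hw.1.2, fun z hz hwz => ?_⟩⟩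
  · obtain rfl : y = w := (hw.2 ⟨hy, hya⟩).eq_of_not_lt (hymax w hw.1.1)
    exact maximal_iff_forall_gt.mpr ⟨hy, fun z hyz hz => hymax z hz hyz⟩
  · exact (maximal_iff_forall_gt.mp hmax).2 hwz hz

section Coloring

variable {C : Type*} {c : P → C} {a : C} {I : Set P} {w x : P}

theorem exists_isGreatest_color (hEC : EC c) (hI : IsLowerSet I) (hx : x ∉ I) (hxa : c x = a)
    {z : P} (hz : z ∈ I) (hza : c z = a) : ∃ w, IsGreatest {y ∈ I | c y = a} w := by
  classical
  have hlt : ∀ y ∈ I, c y = a → y < x := fun y hy hya =>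
    hI.lt_of_le_or_le hy hx (hEC y x (hya.trans hxa.symm))
  obtain ⟨w, hwS, hwmax⟩ := Finset.exists_maximal
    (s := {y ∈ Finset.Icc z x | y ∈ I ∧ c y = a}) ⟨z, by simp [hz, hza, (hlt z hz hza).le]⟩
  simp only [Finset.mem_filter, Finset.mem_Icc] at hwS hwmax
  refine ⟨w, hwS.2, fun y ⟨hy, hya⟩ => ?_⟩
  rcases hEC y w (hya.trans hwS.2.2.symm) with hyw | hwy
  · exact hyw
  · exact hwmax ⟨⟨hwS.1.1.trans hwy, (hlt y hy hya).le⟩, hy, hya⟩ hwy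

theorem consecutive_of_isGreatest_of_minimal (hw : IsGreatest {y ∈ I | c y = a} w)
    (hxa : c x = a) (hxmin : ∀ y ∈ Iᶜ, c y = a → ¬ y < x) (hwx : w < x) :
    Consecutive c a w x := by
  refine ⟨hwx, hw.1.2, hxa, fun t ht hta => ?_⟩
  rw [Finset.mem_Ioo] at ht
  by_cases htI : t ∈ I
  · exact (hw.2 ⟨htI, hta⟩).not_gt ht.1
  · exact hxmin t htI hta ht.2

end Coloring

section Census

variable {D : DynkinDiagram Γ} {κ : P → Γ} {a : Γ}

open scoped Classical in
/-- Only the colors adjacent to `a` contribute to the census of an interval avoiding `a`. -/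
theorem ICE2.sum_filter_adj_add_sum_filter_adj (hICE2 : ICE2 D κ) {w x : P}
    (hwx : Consecutive κ a w x) (p : P → Prop) :
    ∑ t ∈ Finset.Ioo w x with D.Adj (κ t) a ∧ ¬ p t, -D.θ (κ t) a +
      ∑ t ∈ Finset.Ioo w x with D.Adj (κ t) a ∧ p t, -D.θ (κ t) a = 2 := by
  have hadj : ∑ t ∈ Finset.Ioo w x with D.Adj (κ t) a, -D.θ (κ t) a = 2 := by
    rw [Finset.sum_filter_of_ne fun t ht hθ => ?_]
    · exact hICE2 a w x hwx
    · by_contra h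
      exact hθ (by rw [D.θ_eq_zero_of_not_adj_s8 (hwx.2.2.2 t ht) h, neg_zero])
  rw [← hadj, ← Finset.sum_filter_not_add_sum_filter
    ({t ∈ Finset.Ioo w x | D.Adj (κ t) a}) p, Finset.filter_filter, Finset.filter_filter]

variable {I : Set P} {w x : P}

open scoped Classical in
theorem LSet_toFinset_eq_filter (hAC : AC D κ) (hI : IsLowerSet I) (hw : w ∈ I) (hwa : κ w = a)
    (hxa : κ x = a) (hfin : (LSet D κ Iᶜ x).Finite) :
    hfin.toFinset = {t ∈ Finset.Ioo w x | D.Adj (κ t) a ∧ t ∉ I} := by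
  ext t
  simp only [Set.Finite.mem_toFinset, LSet, Set.mem_compl_iff,
    Finset.mem_filter, Finset.mem_Ioo, hxa]
  refine ⟨fun ⟨htI, htx, hadj⟩ => ⟨⟨?_, htx⟩, hadj, htI⟩,
    fun ⟨⟨_, htx⟩, hadj, htI⟩ => ⟨htI, htx, hadj⟩⟩
  exact hI.lt_of_le_or_le hw htI (hAC w t (hwa ▸ hadj.symm))

theorem maximal_mem_iff_forall_Ioo (hNA : NA D κ) (hAC : AC D κ) (hI : IsLowerSet I) (hw : w ∈ I)
    (hwa : κ w = a) (hx : x ∉ I) (hxa : κ x = a) :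
    Maximal (· ∈ I) w ↔ ∀ t ∈ Finset.Ioo w x, ¬ (D.Adj (κ t) a ∧ t ∈ I) := by
  refine ⟨fun hmax t ht ⟨_, htI⟩ => ?_,
    fun h => maximal_iff_forall_gt.mpr ⟨hw, fun u hwu huI => ?_⟩⟩
  · exact (maximal_iff_forall_gt.mp hmax).2 (Finset.mem_Ioo.mp ht).1 htI
  · obtain ⟨v, hwv, hvu⟩ := exists_covBy_le_of_lt hwu
    have hvI : v ∈ I := hI hvu huI
    have hadj : D.Adj (κ v) a := hwa ▸ (hNA w v hwv).symm
    have hvx : v < x := hI.lt_of_le_or_le hvI hx (hAC v x (hxa ▸ hadj))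
    exact h v (Finset.mem_Ioo.mpr ⟨hwv.lt, hvx⟩) ⟨hadj, hvI⟩

end Census

theorem statement8_general (D : DynkinDiagram Γ) (κ : P → Γ)
    (hdc : DComplete D κ) (I : Set P) (hI : IsLowerSet I) (a : Γ)
    (hIa : ∃ z ∈ I, κ z = a) (x : P)
    (hxF : x ∈ Iᶜ) (hxa : κ x = a) (hxmin : ∀ y ∈ Iᶜ, κ y = a → ¬ y < x)
    (hfin : (LSet D κ Iᶜ x).Finite) :
    (∑ y ∈ hfin.toFinset, (-D.θ (κ y) a)) ∈ ({0, 1, 2} : Set ℤ) ∧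
      ((∑ y ∈ hfin.toFinset, (-D.θ (κ y) a)) = 2 ↔
        ∃ y ∈ I, κ y = a ∧ ∀ z ∈ I, ¬ y < z) := by
  classical
  obtain ⟨hEC, hNA, hAC, hICE2, -⟩ := hdc
  obtain ⟨z, hzI, hza⟩ := hIa
  obtain ⟨w, hw⟩ := exists_isGreatest_color hEC hI hxF hxa hzI hza
  have hwx : w < x := hI.lt_of_le_or_le hw.1.1 hxF (hEC w x (hw.1.2.trans hxa.symm))
  have hsum := hICE2.sum_filter_adj_add_sum_filter_adj
    (consecutive_of_isGreatest_of_minimal hw hxa hxmin hwx) (· ∈ I)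
  rw [hw.exists_maximal_iff, maximal_mem_iff_forall_Ioo hNA hAC hI hw.1.1 hw.1.2 hxF hxa,
    ← Finset.filter_eq_empty_iff, LSet_toFinset_eq_filter hAC hI hw.1.1 hw.1.2 hxa hfin]
  have hF := D.card_le_sum_neg_θ (s := {t ∈ Finset.Ioo w x | D.Adj (κ t) a ∧ t ∉ I})
    fun t ht => (Finset.mem_filter.mp ht).2.1
  have hJ := D.card_le_sum_neg_θ (s := {t ∈ Finset.Ioo w x | D.Adj (κ t) a ∧ t ∈ I})
    fun t ht => (Finset.mem_filter.mp ht).2.1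
  refine ⟨by simp only [Set.mem_insert_iff, Set.mem_singleton_iff]; omega,
    fun hL2 => ?_, fun hJ0 => ?_⟩
  · exact Finset.card_eq_zero.mp (by omega)
  · rw [hJ0, Finset.sum_empty] at hsum
    omega

/-- the lower frontier census of a filter, when defined and when
the complementary ideal contains an element of color `a`, lies in `{0,1,2}`,
and equals `2` iff the ideal has a maximal element of color `a`. -/
theorem statement8 (D : DynkinDiagram Γ) (κ : P → Γ) (hsurj : Function.Surjective κ)
    (hdc : DComplete D κ) (I : Set P) (hI : IsLowerSet I) (a : Γ)
    (hIa : ∃ z ∈ I, κ z = a) (x : P)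
    (hxF : x ∈ Iᶜ) (hxa : κ x = a) (hxmin : ∀ y ∈ Iᶜ, κ y = a → ¬ y < x)
    (hfin : (LSet D κ Iᶜ x).Finite) :
    (∑ y ∈ hfin.toFinset, (-D.θ (κ y) a)) ∈ ({0, 1, 2} : Set ℤ) ∧
      ((∑ y ∈ hfin.toFinset, (-D.θ (κ y) a)) = 2 ↔
        ∃ y ∈ I, κ y = a ∧ ∀ z ∈ I, ¬ y < z) :=
  statement8_general D κ hdc I hI a hIa x hxF hxa hxmin hfin

end GCP
end

section
/- Let P be a Γ-colored d-complete poset such that for every color b, the set P_b is bounded above in P. Then P is finite. -/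
/-!
If `P` were infinite, then, the color classes being bounded above, every principal filter of `P`
would be finite, so `P` would contain an infinite sequence of distinct elements `f 0, f 1, …` in
which everything above `f n` comes before `f n`. Along its color word, UCB1 bounds the census of
the letters preceding the first occurrence of a color by `1` and ICE2 makes the census between
two consecutive occurrences equal to `2`; so a color has the same census `μ ∈ {0, 1}` at each of
its occurrences.

No infinite word has these properties. At most one neighbor of a color occurs before the color
itself, so the occurring colors form a forest and the Cartan matrix is symmetrizable on them,
by some `ε > 0`. Pairing a window `[m, n)` of the word with everything before it gives
`∑_{j ∈ [m, n)} 2 ε_j (1 - μ_j) + 2 ∑_{i < m} ε_i Δ_i + ∑_{i ∈ [m, n)} ε_i Δ_i = 0`, where `Δ` is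
the census of the window. Far out only recurrent colors occur, and their censuses are bounded, so
by pigeonhole some window starting at an occurrence of the first recurrent color `c` has `Δ ≥ 0`.
Then every term is nonnegative, and one is positive: the one of `c` if `μ_c = 0`, and otherwise
the one of the neighbor of `c` that occurs before it, which is not recurrent.
-/

namespace GCP

variable {Γ : Type*} [Fintype Γ] {P : Type*} [PartialOrder P] [LocallyFiniteOrder P]

open Finset

/-- With `B i j = ε (c j) * A (c i) (c j)`, which is symmetric, both sides equal the sum of `B i j`
over all `i, j < n` with `m ≤ max i j`. -/
theorem sum_Ico_two_mul_sum_range_of_symm {R ι : Type*} [CommRing R] (c : ℕ → ι) (ε : ι → R)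
    (A : ι → ι → R)
    (hsymm : ∀ i j, ε (c j) * A (c i) (c j) = ε (c i) * A (c j) (c i)) {m n : ℕ} (hmn : m ≤ n) :
    ∑ j ∈ Ico m n, ε (c j) * (2 * ∑ i ∈ range j, A (c i) (c j) + A (c j) (c j)) =
      2 * ∑ i ∈ range m, ε (c i) * ∑ j ∈ Ico m n, A (c j) (c i) +
        ∑ i ∈ Ico m n, ε (c i) * ∑ j ∈ Ico m n, A (c j) (c i) := by
  induction n, hmn using Nat.le_induction with
  | base => simp
  | succ n hmn ih =>
    have hswap : ∀ s : Finset ℕ,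
        ∑ i ∈ s, ε (c i) * A (c n) (c i) = ε (c n) * ∑ i ∈ s, A (c i) (c n) := fun s => by
      rw [mul_sum]; exact sum_congr rfl fun i _ => (hsymm i n).symm
    simp only [sum_Ico_succ_top hmn, mul_add, sum_add_distrib, hswap] at ih ⊢
    rw [← sum_range_add_sum_Ico _ hmn]
    linear_combination ih

theorem exists_last_eq {β : Type*} {col : ℕ → β} {b : β} {m n : ℕ} (hm : col m = b) (h : m < n) :
    ∃ p, m ≤ p ∧ p < n ∧ col p = b ∧ ∀ i ∈ Ioo p n, col i ≠ b := by
  classical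
  exact ⟨Nat.findGreatest (col · = b) (n - 1), Nat.le_findGreatest (by omega) hm,
    (Nat.findGreatest_le _).trans_lt (by omega),
    Nat.findGreatest_spec (P := (col · = b)) (by omega : m ≤ n - 1) hm,
    fun i hi => Nat.findGreatest_is_greatest (mem_Ioo.1 hi).1 (by have := (mem_Ioo.1 hi).2; omega)⟩

theorem exists_forall_ge_infinite_preimage {β : Type*} [Finite β] (col : ℕ → β) :
    ∃ N, ∀ n ≥ N, (col ⁻¹' {col n}).Infinite := by
  have hfin : {n | ¬ (col ⁻¹' {col n}).Infinite}.Finite :=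
    ((Set.toFinite {b | ¬ (col ⁻¹' {b}).Infinite}).biUnion fun _ hb => Set.not_infinite.1 hb).subset
      fun n hn => Set.mem_biUnion hn rfl
  obtain ⟨N, hN⟩ := hfin.bddAbove
  exact ⟨N + 1, fun n hn => by_contra fun h => by have := hN h; omega⟩

namespace DynkinDiagram

variable (D : DynkinDiagram Γ)

theorem exists_symmetrizer_of_unique_earlier_neighbor [DecidableEq Γ] (s : Finset Γ) (rank : Γ → ℕ)
    (hrank : Set.InjOn rank s)
    (huniq : ∀ c ∈ s, ∀ g ∈ s, ∀ g' ∈ s, rank g < rank c → rank g' < rank c →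
      D.θ g c ≠ 0 → D.θ g' c ≠ 0 → g = g') :
    ∃ ε : Γ → ℚ, (∀ a, 0 < ε a) ∧ ∀ a ∈ s, ∀ b ∈ s, ε b * D.θ a b = ε a * D.θ b a := by
  induction s using Finset.induction_on_max_value rank with
  | empty => exact ⟨1, fun _ => one_pos, by simp⟩
  | insert a s ha hmax ih =>
    obtain ⟨ε, hpos, hsym⟩ := ih (hrank.mono (coe_subset.2 (subset_insert a s)))
      fun c hc g hg g' hg' =>
        huniq c (mem_insert_of_mem hc) g (mem_insert_of_mem hg) g' (mem_insert_of_mem hg')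
    have hne : ∀ b ∈ s, b ≠ a := fun b hb h => ha (h ▸ hb)
    have hlt : ∀ b ∈ s, rank b < rank a := fun b hb => (hmax b hb).lt_of_ne fun h =>
      hne b hb (hrank (mem_insert_of_mem hb) (mem_insert_self a s) h)
    obtain ⟨e, he, hea⟩ : ∃ e : ℚ, 0 < e ∧ ∀ b ∈ s, ε b * D.θ a b = e * D.θ b a := by
      by_cases hg : ∃ g ∈ s, D.θ g a ≠ 0
      · obtain ⟨g, hgs, hga⟩ := hg
        have hga' : (D.θ g a : ℚ) < 0 := by
          exact_mod_cast (D.offdiag_nonpos g a (hne g hgs)).lt_of_ne hga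
        have hag' : (D.θ a g : ℚ) < 0 := by
          exact_mod_cast (D.offdiag_nonpos a g (hne g hgs).symm).lt_of_ne
            ((D.zero_iff g a (hne g hgs)).not.1 hga)
        refine ⟨ε g * D.θ a g / D.θ g a,
          div_pos_of_neg_of_neg (mul_neg_of_pos_of_neg (hpos g) hag') hga', fun b hb => ?_⟩
        by_cases hbg : b = g
        · subst hbg; field_simp
        · have hba : D.θ b a = 0 := by_contra fun h => hbg <|
            huniq a (mem_insert_self a s) b (mem_insert_of_mem hb) g (mem_insert_of_mem hgs)
              (hlt b hb) (hlt g hgs) h hga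
          simp [hba, (D.zero_iff b a (hne b hb)).1 hba]
      · push Not at hg
        exact ⟨1, one_pos, fun b hb => by simp [hg b hb, (D.zero_iff b a (hne b hb)).1 (hg b hb)]⟩
    have hupd : ∀ b ∈ s, Function.update ε a e b = ε b := fun b hb =>
      Function.update_of_ne (hne b hb) _ _
    refine ⟨Function.update ε a e, fun x => ?_, ?_⟩
    · rcases eq_or_ne x a with rfl | hx
      · simpa using he
      · simpa [hx] using hpos x
    · simp only [mem_insert]
      rintro x (rfl | hx) y (rfl | hy)
      · rfl
      · rw [hupd y hy, Function.update_self, hea y hy]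
      · rw [hupd x hx, Function.update_self, hea x hx]
      · rw [hupd x hx, hupd y hy, hsym x hx y hy]

def census (col : ℕ → Γ) (s : Finset ℕ) (c : Γ) : ℤ :=
  ∑ i ∈ s, -D.θ (col i) c

/-- The conditions UCB1 and ICE2, read along the color word of a top-down listing of a poset. -/
structure DCompleteWord (col : ℕ → Γ) : Prop where
  census_first_le_one : ∀ c t, col t = c → (∀ i < t, col i ≠ c) → D.census col (range t) c ≤ 1
  census_consecutive : ∀ c m n, m < n → col m = c → col n = c →
    (∀ i ∈ Ioo m n, col i ≠ c) → D.census col (Ioo m n) c = 2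

variable {D} {col : ℕ → Γ} {s : Finset ℕ} {c : Γ} {m n p : ℕ}

theorem census_nonneg (h : ∀ i ∈ s, col i ≠ c) : 0 ≤ D.census col s c :=
  sum_nonneg fun i hi => neg_nonneg.2 (D.offdiag_nonpos _ _ (h i hi))

theorem census_range_add_Ico (h : m ≤ n) :
    D.census col (range n) c = D.census col (range m) c + D.census col (Ico m n) c :=
  (sum_range_add_sum_Ico _ h).symm

theorem census_range_eq_sub_two_add_Ioo (hp : col p = c) (h : p < n) :
    D.census col (range n) c = D.census col (range p) c - 2 + D.census col (Ioo p n) c := by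
  rw [census_range_add_Ico h.le, census, census, census, sum_eq_sum_Ico_succ_bot h,
    Ico_add_one_left_eq_Ioo, hp, D.diag]
  ring

theorem sum_census_window_eq_zero {ε : Γ → ℚ}
    (hsymm : ∀ i j, ε (col j) * D.θ (col i) (col j) = ε (col i) * D.θ (col j) (col i))
    (hmn : m ≤ n) :
    ∑ j ∈ Ico m n, 2 * ε (col j) * (1 - D.census col (range j) (col j)) +
      2 * ∑ i ∈ range m, ε (col i) * D.census col (Ico m n) (col i) +
        ∑ i ∈ Ico m n, ε (col i) * D.census col (Ico m n) (col i) = 0 := by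
  have := sum_Ico_two_mul_sum_range_of_symm col ε (fun a b => (D.θ a b : ℚ)) hsymm hmn
  simp only [census, D.diag, Int.cast_sum, Int.cast_neg, Int.cast_ofNat, sum_neg_distrib, mul_neg,
    sub_neg_eq_add] at this ⊢
  rw [← this.symm.trans (sum_congr rfl fun j _ => by ring)]
  ring

namespace DCompleteWord

variable (hw : D.DCompleteWord col)
include hw

theorem census_range_eq_of_col_eq (hm : col m = c) (hn : col n = c) (hmn : m ≤ n) :
    D.census col (range n) c = D.census col (range m) c := by
  induction n using Nat.strong_induction_on with
  | _ n ih =>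
    rcases hmn.eq_or_lt with rfl | hlt
    · rfl
    obtain ⟨p, hmp, hpn, hp, hgap⟩ := exists_last_eq hm hlt
    rw [census_range_eq_sub_two_add_Ioo hp hpn, hw.census_consecutive c p n hpn hp hn hgap,
      ih p hpn hp hmp]
    ring

theorem census_range_mem_Icc_of_col_eq (hn : col n = c) :
    D.census col (range n) c ∈ Set.Icc 0 1 := by
  have ht : col (sInf {k | col k = c}) = c := Nat.sInf_mem (s := {k | col k = c}) ⟨n, hn⟩
  have hfirst : ∀ i < sInf {k | col k = c}, col i ≠ c := fun i hi => Nat.notMem_of_lt_sInf hi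
  rw [hw.census_range_eq_of_col_eq ht hn (Nat.sInf_le hn)]
  exact ⟨census_nonneg fun i hi => hfirst i (mem_range.1 hi),
    hw.census_first_le_one c _ ht hfirst⟩

theorem neg_two_le_census_range (n : ℕ) (c : Γ) : -2 ≤ D.census col (range n) c := by
  by_cases h : ∃ m < n, col m = c
  · obtain ⟨m, hmn, hm⟩ := h
    obtain ⟨p, -, hpn, hp, hgap⟩ := exists_last_eq hm hmn
    rw [census_range_eq_sub_two_add_Ioo hp hpn]
    linarith [(hw.census_range_mem_Icc_of_col_eq hp).1, census_nonneg (D := D) hgap]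
  · push Not at h
    linarith [census_nonneg (D := D) (s := range n) (c := c) fun i hi => h i (mem_range.1 hi)]

theorem census_range_le_one (hp : col p = c) (hnp : n ≤ p) : D.census col (range n) c ≤ 1 := by
  obtain ⟨hnq, hq⟩ : n ≤ sInf {k | n ≤ k ∧ col k = c} ∧ col (sInf {k | n ≤ k ∧ col k = c}) = c :=
    Nat.sInf_mem (s := {k | n ≤ k ∧ col k = c}) ⟨p, hnp, hp⟩
  have hgap : ∀ i ∈ Ico n (sInf {k | n ≤ k ∧ col k = c}), col i ≠ c := fun i hi h =>
    Nat.notMem_of_lt_sInf (mem_Ico.1 hi).2 ⟨(mem_Ico.1 hi).1, h⟩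
  linarith [census_range_add_Ico (D := D) (col := col) (c := c) hnq, census_nonneg (D := D) hgap,
    (hw.census_range_mem_Icc_of_col_eq hq).2]

theorem col_eq_of_lt_first {t i j : ℕ} (ht : col t = c) (hfirst : ∀ k < t, col k ≠ c)
    (hi : i < t) (hj : j < t) (hθi : D.θ (col i) c ≠ 0) (hθj : D.θ (col j) c ≠ 0) :
    col i = col j := by
  by_contra hij
  have hne : i ≠ j := fun h => hij (h ▸ rfl)
  have h1 := D.offdiag_nonpos _ _ (hfirst i hi)
  have h2 := D.offdiag_nonpos _ _ (hfirst j hj)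
  have hsub : ∑ k ∈ {i, j}, -D.θ (col k) c ≤ D.census col (range t) c :=
    sum_le_sum_of_subset_of_nonneg
      (by intro k; simp only [mem_insert, mem_singleton, mem_range]; omega)
      fun k hk _ => neg_nonneg.2 (D.offdiag_nonpos _ _ (hfirst k (mem_range.1 hk)))
  rw [sum_pair hne] at hsub
  have := hw.census_first_le_one c t ht hfirst
  omega

theorem exists_symmetrizer :
    ∃ ε : Γ → ℚ, (∀ a, 0 < ε a) ∧
      ∀ i j, ε (col j) * D.θ (col i) (col j) = ε (col i) * D.θ (col j) (col i) := by
  classical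
  let first : Γ → ℕ := fun c => sInf {k | col k = c}
  have hfirst : ∀ i, col (first (col i)) = col i := fun i =>
    Nat.sInf_mem (s := {k | col k = col i}) ⟨i, rfl⟩
  have hbefore : ∀ i k, k < first (col i) → col k ≠ col i := fun i k hk => Nat.notMem_of_lt_sInf hk
  obtain ⟨ε, hpos, hsym⟩ := D.exists_symmetrizer_of_unique_earlier_neighbor
    (univ.filter (· ∈ Set.range col)) first
    (by
      rintro _ ha _ hb hab
      obtain ⟨i, rfl⟩ := (mem_filter.1 ha).2
      obtain ⟨j, rfl⟩ := (mem_filter.1 hb).2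
      rw [← hfirst i, ← hfirst j]
      exact congrArg col hab)
    (by
      rintro _ hc _ hg _ hg' hgc hg'c hθ hθ'
      obtain ⟨k, rfl⟩ := (mem_filter.1 hc).2
      obtain ⟨i, rfl⟩ := (mem_filter.1 hg).2
      obtain ⟨j, rfl⟩ := (mem_filter.1 hg').2
      rw [← hfirst i] at hθ
      rw [← hfirst j] at hθ'
      have := hw.col_eq_of_lt_first (hfirst k) (hbefore k) hgc hg'c hθ hθ'
      rwa [hfirst, hfirst] at this)
  exact ⟨ε, hpos, fun i j => hsym _ (by simp) _ (by simp)⟩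

theorem exists_Ico_census_nonneg {N₀ : ℕ} (hN₀ : ∀ k ≥ N₀, (col ⁻¹' {col k}).Infinite)
    (hc : (col ⁻¹' {c}).Infinite) :
    ∃ m n, N₀ ≤ m ∧ m < n ∧ col m = c ∧ ∀ b, 0 ≤ D.census col (Ico m n) b := by
  let φ : ℕ → {b | (col ⁻¹' {b}).Infinite} → ℤ := fun n b => D.census col (range n) b
  have hT : {n | N₀ ≤ n ∧ col n = c}.Infinite :=
    (hc.sdiff (Set.finite_lt_nat N₀)).mono fun n hn => ⟨not_lt.1 hn.2, hn.1⟩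
  have hφ : Set.MapsTo φ {n | N₀ ≤ n ∧ col n = c} (Set.univ.pi fun _ => Set.Icc (-2) 1) :=
    fun n _ b _ =>
      let ⟨p, hp, hnp⟩ := b.2.exists_gt n
      ⟨hw.neg_two_le_census_range n b, hw.census_range_le_one hp hnp.le⟩
  obtain ⟨m, ⟨hm, hcm⟩, n, -, hmn, hφmn⟩ :=
    hT.exists_lt_map_eq_of_mapsTo hφ (Set.Finite.pi fun _ => Set.finite_Icc _ _)
  refine ⟨m, n, hm, hmn, hcm, fun b => ?_⟩
  by_cases hb : (col ⁻¹' {b}).Infinite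
  · have hb_eq : D.census col (range m) b = D.census col (range n) b := congrFun hφmn ⟨b, hb⟩
    have := census_range_add_Ico (D := D) (col := col) (c := b) hmn.le
    omega
  · exact census_nonneg fun j hj h => hb (h ▸ hN₀ j (hm.trans (mem_Ico.1 hj).1))

end DCompleteWord

theorem not_dCompleteWord : ¬ D.DCompleteWord col := fun hw => by
  obtain ⟨ε, hε, hsymm⟩ := hw.exists_symmetrizer
  obtain ⟨N₀, hN₀⟩ := exists_forall_ge_infinite_preimage col
  set t₀ := sInf {t | (col ⁻¹' {col t}).Infinite}
  have ht₀ : (col ⁻¹' {col t₀}).Infinite :=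
    Nat.sInf_mem (s := {t | (col ⁻¹' {col t}).Infinite}) ⟨N₀, hN₀ N₀ le_rfl⟩
  have hbefore : ∀ i < t₀, ¬ (col ⁻¹' {col i}).Infinite := fun i hi => Nat.notMem_of_lt_sInf hi
  obtain ⟨m, n, hm, hmn, hcm, hΔ⟩ := hw.exists_Ico_census_nonneg hN₀ ht₀
  have ht₀m : t₀ ≤ m := Nat.sInf_le (show (col ⁻¹' {col m}).Infinite from hcm ▸ ht₀)
  have hL : ∀ j ∈ Ico m n, 0 ≤ 2 * ε (col j) * (1 - D.census col (range j) (col j)) := fun j _ =>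
    mul_nonneg (mul_nonneg zero_le_two (hε _).le)
      (sub_nonneg.2 (by exact_mod_cast (hw.census_range_mem_Icc_of_col_eq rfl).2))
  have hR : ∀ i, 0 ≤ ε (col i) * D.census col (Ico m n) (col i) := fun i =>
    mul_nonneg (hε _).le (by exact_mod_cast hΔ (col i))
  have key := sum_census_window_eq_zero hsymm hmn.le
  have hR₂ := sum_nonneg fun i (_ : i ∈ Ico m n) => hR i
  by_cases h0 : D.census col (range t₀) (col t₀) = 0
  · -- the first recurrent color has census `0` at each occurrence, so the term `j = m` is positive
    have hm0 : D.census col (range m) (col m) = 0 := by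
      rw [hcm, hw.census_range_eq_of_col_eq rfl hcm ht₀m, h0]
    have hpos := sum_pos' hL ⟨m, mem_Ico.2 ⟨le_rfl, hmn⟩, by rw [hm0]; simpa using hε (col m)⟩
    linarith [sum_nonneg fun i (_ : i ∈ range m) => hR i]
  · -- otherwise it has a neighbor occurring before `t₀`, which is not recurrent
    obtain ⟨i, hi, hθ⟩ := exists_ne_zero_of_sum_ne_zero h0
    have hit₀ := mem_range.1 hi
    have hne : col t₀ ≠ col i := fun h => hbefore i hit₀ (h ▸ ht₀)
    have hθ' : D.θ (col m) (col i) < 0 := by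
      rw [hcm]
      exact (D.offdiag_nonpos _ _ hne).lt_of_ne ((D.zero_iff _ _ hne.symm).not.1 (neg_ne_zero.1 hθ))
    have hcens : 0 < D.census col (Ico m n) (col i) := by
      refine lt_of_lt_of_le (neg_pos.2 hθ') (single_le_sum (f := fun j => -D.θ (col j) (col i))
        (fun j hj => neg_nonneg.2 (D.offdiag_nonpos _ _ fun h => hbefore i hit₀ ?_))
        (mem_Ico.2 ⟨le_rfl, hmn⟩))
      exact h ▸ hN₀ j (hm.trans (mem_Ico.1 hj).1)
    have hpos := sum_pos' (fun i (_ : i ∈ range m) => hR i)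
      ⟨i, mem_range.2 (hit₀.trans_le ht₀m), mul_pos (hε _) (by exact_mod_cast hcens)⟩
    linarith [sum_nonneg hL]

end DynkinDiagram

section TopDown

variable {α : Type*} [PartialOrder α]

structure IsTopDownSeq (f : ℕ → α) : Prop where
  injective : Function.Injective f
  exists_eq_of_lt : ∀ n z, f n < z → ∃ m < n, f m = z

theorem finite_Ici_of_colorBddAbove [LocallyFiniteOrder α] {κ : α → Γ}
    (hbdd : ∀ b, ColorBddAbove κ b) (x : α) : (Set.Ici x).Finite := by
  choose u hu using hbdd
  exact (Set.finite_iUnion fun b => Set.finite_Icc x (u b)).subset fun y hy =>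
    Set.mem_iUnion.2 ⟨κ y, hy, hu _ y rfl⟩

theorem exists_isTopDownSeq [Infinite α] (h : ∀ x : α, (Set.Ici x).Finite) :
    ∃ f : ℕ → α, IsTopDownSeq f := by
  classical
  have hpick : ∀ s : Finset α, ∃ y ∉ s, ∀ z, y < z → z ∈ s := by
    intro s
    obtain ⟨x, hx⟩ := Infinite.exists_notMem_finset s
    obtain ⟨y, ⟨hxy, hys⟩, hmax⟩ :=
      ((h x).subset (Set.sdiff_subset (t := (s : Set α)))).exists_maximal ⟨x, le_rfl, hx⟩
    exact ⟨y, hys, fun z hyz => by_contra fun hz => hyz.not_ge (hmax ⟨hxy.trans hyz.le, hz⟩ hyz.le)⟩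
  choose pick hpick_notMem hpick_max using hpick
  let s : ℕ → Finset α := fun n => Nat.rec ∅ (fun _ t => insert (pick t) t) n
  have hs : ∀ n, s n = (range n).image fun k => pick (s k) := by
    intro n
    induction n with
    | zero => rfl
    | succ n ih => rw [range_add_one, image_insert, ← ih]
  have hmem : ∀ m n, m < n → pick (s m) ∈ s n := fun m n h => by
    rw [hs n]; exact mem_image_of_mem _ (mem_range.2 h)
  refine ⟨fun n => pick (s n), fun a b hab => ?_, fun n z hz => ?_⟩
  · by_contra hne
    rcases lt_or_gt_of_ne hne with h | h
    · exact hpick_notMem (s b) (hab ▸ hmem a b h)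
    · exact hpick_notMem (s a) (hab ▸ hmem b a h)
  · obtain ⟨m, hm, hmz⟩ := mem_image.1 (hs n ▸ hpick_max (s n) z hz)
    exact ⟨m, mem_range.1 hm, hmz⟩

namespace IsTopDownSeq

variable {D : DynkinDiagram Γ} {κ : α → Γ} {f : ℕ → α} {c : Γ} {m n t : ℕ}

theorem not_lt_of_lt (hf : IsTopDownSeq f) (h : m < n) : ¬ f m < f n := fun hlt => by
  obtain ⟨k, hk, hfk⟩ := hf.exists_eq_of_lt m (f n) hlt
  exact (hk.trans h).ne (hf.injective hfk)

theorem exists_mem_Ioo [LocallyFiniteOrder α] (hf : IsTopDownSeq f) {z : α}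
    (hz : z ∈ Ioo (f n) (f m)) : ∃ i ∈ Ioo m n, f i = z := by
  obtain ⟨hnz, hzm⟩ := mem_Ioo.1 hz
  obtain ⟨i, hin, rfl⟩ := hf.exists_eq_of_lt n z hnz
  refine ⟨i, mem_Ioo.2 ⟨?_, hin⟩, rfl⟩
  rcases lt_trichotomy m i with h | rfl | h
  · exact h
  · exact absurd hzm (lt_irrefl _)
  · exact absurd hzm (hf.not_lt_of_lt h)

theorem lt_of_theta_ne_zero (hf : IsTopDownSeq f) (hEC : EC κ) (hAC : AC D κ) (h : m < n)
    (hθ : D.θ (κ (f m)) (κ (f n)) ≠ 0) : f n < f m := by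
  have hcomp : f m ≤ f n ∨ f n ≤ f m := by
    by_cases hc : κ (f m) = κ (f n)
    · exact hEC _ _ hc
    · exact hAC _ _ ⟨hc, (D.offdiag_nonpos _ _ hc).lt_of_ne hθ⟩
  have hne : f n ≠ f m := fun e => h.ne' (hf.injective e)
  exact (hcomp.resolve_left fun hle => hf.not_lt_of_lt h (hle.lt_of_ne hne.symm)).lt_of_ne hne

theorem census_first_le_one (hf : IsTopDownSeq f) (hEC : EC κ) (hAC : AC D κ) (hUCB : UCB D κ 1)
    (ht : κ (f t) = c) (hfirst : ∀ i < t, κ (f i) ≠ c) : D.census (κ ∘ f) (range t) c ≤ 1 := by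
  have hmax : ∀ y, κ y = κ (f t) → ¬ f t < y := fun y hy hlt => by
    obtain ⟨i, hi, rfl⟩ := hf.exists_eq_of_lt t y hlt
    exact hfirst i hi (hy.trans ht)
  obtain ⟨hfin, hsum⟩ := hUCB (f t) hmax
  subst ht
  calc D.census (κ ∘ f) (range t) (κ (f t))
      = ∑ y ∈ hfin.toFinset, -D.θ (κ y) (κ (f t)) := by
        refine sum_bij_ne_zero (fun i _ _ => f i) (fun i hi hθ => ?_)
          (fun _ _ _ _ _ _ h => hf.injective h) (fun y hy _ => ?_) (fun _ _ _ => rfl)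
        · have hi := mem_range.1 hi
          have hθ := neg_ne_zero.1 hθ
          rw [Set.Finite.mem_toFinset]
          exact ⟨trivial, hf.lt_of_theta_ne_zero hEC hAC hi hθ, hfirst i hi,
            (D.offdiag_nonpos _ _ (hfirst i hi)).lt_of_ne hθ⟩
        · obtain ⟨-, hlt, hadj⟩ := (Set.Finite.mem_toFinset _).1 hy
          obtain ⟨i, hi, rfl⟩ := hf.exists_eq_of_lt t y hlt
          exact ⟨i, mem_range.2 hi, neg_ne_zero.2 hadj.2.ne, rfl⟩
    _ ≤ 1 := mod_cast hsum

theorem census_consecutive [LocallyFiniteOrder α] (hf : IsTopDownSeq f) (hEC : EC κ)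
    (hAC : AC D κ) (hICE : ICE2 D κ) (hmn : m < n) (hm : κ (f m) = c) (hn : κ (f n) = c)
    (hgap : ∀ i ∈ Ioo m n, κ (f i) ≠ c) : D.census (κ ∘ f) (Ioo m n) c = 2 := by
  have hlt : f n < f m := hf.lt_of_theta_ne_zero hEC hAC hmn (by rw [hm, hn, D.diag]; norm_num)
  have hcons : Consecutive κ c (f n) (f m) := ⟨hlt, hn, hm, fun z hz => by
    obtain ⟨i, hi, rfl⟩ := hf.exists_mem_Ioo hz
    exact hgap i hi⟩
  rw [← hICE c _ _ hcons]
  refine sum_bij_ne_zero (fun i _ _ => f i) (fun i hi hθ => ?_)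
    (fun _ _ _ _ _ _ h => hf.injective h) (fun z hz _ => ?_) (fun _ _ _ => rfl)
  · obtain ⟨hmi, hin⟩ := mem_Ioo.1 hi
    have hθ := neg_ne_zero.1 hθ
    refine mem_Ioo.2 ⟨hf.lt_of_theta_ne_zero hEC hAC hin (hn ▸ hθ),
      hf.lt_of_theta_ne_zero hEC hAC hmi ?_⟩
    rw [hm]
    exact (D.zero_iff _ _ (hgap i hi)).not.1 hθ
  · obtain ⟨i, hi, rfl⟩ := hf.exists_mem_Ioo hz
    exact ⟨i, hi, ‹_›, rfl⟩

theorem dCompleteWord [LocallyFiniteOrder α] (hf : IsTopDownSeq f) (hdc : DComplete D κ) :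
    D.DCompleteWord (κ ∘ f) :=
  let ⟨hEC, _, hAC, hICE, hUCB⟩ := hdc
  ⟨fun _ _ ht hfirst => hf.census_first_le_one hEC hAC hUCB ht hfirst,
    fun _ _ _ hmn hm hn hgap => hf.census_consecutive hEC hAC hICE hmn hm hn hgap⟩

end IsTopDownSeq

end TopDown

theorem statement9_general (D : DynkinDiagram Γ) (κ : P → Γ)
    (hdc : DComplete D κ) (hbdd : ∀ b : Γ, ColorBddAbove κ b) :
    Finite P := by
  by_contra hfin
  have : Infinite P := not_finite_iff_infinite.1 hfin
  obtain ⟨f, hf⟩ := exists_isTopDownSeq (finite_Ici_of_colorBddAbove hbdd)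
  exact DynkinDiagram.not_dCompleteWord (hf.dCompleteWord hdc)

/-- a Γ-colored d-complete poset all of whose color sets are
bounded above is finite. -/
theorem statement9 (D : DynkinDiagram Γ) (κ : P → Γ) (hsurj : Function.Surjective κ)
    (hdc : DComplete D κ) (hbdd : ∀ b : Γ, ColorBddAbove κ b) :
    Finite P :=
  statement9_general D κ hdc hbdd

end GCP
end

section
/- Let k ≥ 1 and let P be a connected Γ-colored poset that satisfies EC, NA, AC, and UCBk. Then either for every color b the set P_b is bounded above in P, or for every color b the set P_b is unbounded above in P. -/
namespace GCP

variable {Γ : Type*} [Fintype Γ] {P : Type*} [PartialOrder P] [LocallyFiniteOrder P]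

/-!
By NA, covering pairs have adjacent colors, so a chain of comparabilities in the connected
locally finite poset `P` projects to a path in the Dynkin diagram: the diagram is connected.
If `P_a` is bounded above, EC makes it a chain with a greatest element `m`. For `b` adjacent to
`a`, AC puts each element of `P_b` either below `m` or in the finite set `U(m, P)` given by UCB,
so `P_b` is bounded above as well. Boundedness therefore spreads along the connected diagram.
-/

theorem IsChain.exists_isGreatest_of_finite {α : Type*} [Preorder α] {s : Set α}
    (hs : IsChain (· ≤ ·) s) {x₀ : α} (hx₀ : x₀ ∈ s) (hfin : {y ∈ s | x₀ ≤ y}.Finite) :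
    ∃ m, IsGreatest s m := by
  obtain ⟨m, ⟨hms, hx₀m⟩, hmax⟩ := hfin.exists_maximal ⟨x₀, hx₀, le_rfl⟩
  refine ⟨m, hms, fun y hys => ?_⟩
  rcases eq_or_ne y m with rfl | hne
  · exact le_rfl
  rcases hs hys hms hne with hym | hmy
  · exact hym
  · exact hmax ⟨hys, hx₀m.trans hmy⟩ hmy

instance DynkinDiagram.instSymmAdj (D : DynkinDiagram Γ) : Std.Symm D.Adj :=
  ⟨fun _ _ h => h.symm⟩

theorem reflTransGen_adj_of_le {D : DynkinDiagram Γ} {κ : P → Γ} (hNA : NA D κ) {x y : P}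
    (h : x ≤ y) : Relation.ReflTransGen D.Adj (κ x) (κ y) :=
  (le_iff_reflTransGen_covBy.mp h).lift κ hNA

theorem DynkinDiagram.connected_of_posetConnected {D : DynkinDiagram Γ} {κ : P → Γ}
    (hsurj : Function.Surjective κ) (hconn : PosetConnected P) (hNA : NA D κ) :
    D.Connected := by
  intro a b
  obtain ⟨x, rfl⟩ := hsurj a
  obtain ⟨y, rfl⟩ := hsurj b
  refine (hconn x y).lift' κ fun u v huv => ?_
  rcases huv with huv | hvu
  · exact reflTransGen_adj_of_le hNA huv
  · exact symm (reflTransGen_adj_of_le hNA hvu)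

theorem ColorBddAbove.of_adj {k : ℕ} {D : DynkinDiagram Γ} {κ : P → Γ}
    (hsurj : Function.Surjective κ) (hEC : EC κ) (hAC : AC D κ) (hUCB : UCB D κ k)
    {a b : Γ} (hab : D.Adj a b) (ha : ColorBddAbove κ a) : ColorBddAbove κ b := by
  have hchain : ∀ c, IsChain (· ≤ ·) {x | κ x = c} :=
    fun c x hx y hy _ => hEC x y (hx.trans hy.symm)
  obtain ⟨u, hu⟩ := ha
  obtain ⟨x₀, hx₀⟩ := hsurj a
  obtain ⟨m, hma, hm⟩ := IsChain.exists_isGreatest_of_finite (hchain a) hx₀ <|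
    (Set.finite_Icc x₀ u).subset fun y ⟨hya, hx₀y⟩ => ⟨hx₀y, hu y hya⟩
  have hmax : ∀ y, κ y = κ m → ¬ m < y := fun y hy hmy => (hm (hy.trans hma)).not_gt hmy
  obtain ⟨hU, -⟩ := hUCB m hmax
  obtain ⟨y₀, hy₀⟩ := hsurj b
  obtain ⟨w, -, hw⟩ := IsChain.exists_isGreatest_of_finite (hchain b) hy₀ <|
    ((Set.finite_Icc y₀ m).union hU).subset fun y ⟨hyb, hy₀y⟩ => by
      have hadj : D.Adj (κ y) (κ m) := by rw [hyb, hma]; exact hab.symm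
      rcases hAC y m hadj with hym | hmy
      · exact Or.inl ⟨hy₀y, hym⟩
      · exact Or.inr ⟨trivial, hmy.lt_of_ne (fun h => hadj.1 (congrArg κ h).symm), hadj⟩
  exact ⟨w, fun x hx => hw hx⟩

theorem statement12_general (k : ℕ) (D : DynkinDiagram Γ) (κ : P → Γ)
    (hsurj : Function.Surjective κ) (hconn : PosetConnected P)
    (hEC : EC κ) (hNA : NA D κ) (hAC : AC D κ) (hUCB : UCB D κ k) :
    (∀ b : Γ, ColorBddAbove κ b) ∨ (∀ b : Γ, ¬ ColorBddAbove κ b) := by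
  by_cases hbdd : ∃ a, ColorBddAbove κ a
  · obtain ⟨a, ha⟩ := hbdd
    refine Or.inl fun b => ?_
    induction D.connected_of_posetConnected hsurj hconn hNA a b with
    | refl => exact ha
    | tail _ hcd ih => exact ih.of_adj hsurj hEC hAC hUCB hcd
  · exact Or.inr fun b hb => hbdd ⟨b, hb⟩

/-- a connected Γ-colored poset satisfying EC, NA, AC, UCBk has
either all color sets bounded above or all color sets unbounded above. -/
theorem statement12 (k : ℕ) (hk : 1 ≤ k) (D : DynkinDiagram Γ) (κ : P → Γ)
    (hsurj : Function.Surjective κ) (hconn : PosetConnected P)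
    (hEC : EC κ) (hNA : NA D κ) (hAC : AC D κ) (hUCB : UCB D κ k) :
    (∀ b : Γ, ColorBddAbove κ b) ∨ (∀ b : Γ, ¬ ColorBddAbove κ b) :=
  statement12_general k D κ hsurj hconn hEC hNA hAC hUCB

end GCP
end
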